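/- arXiv:2206.03295 — 8 statements merged into one kernel-verified Lean document; each statement's English description precedes it below -/
import Mathlib

section
/- Let K be a field of characteristic 2 and let a, h ∈ K[t] be polynomials with a(0) ≠ 0. Then the polynomial t⁴·(a⁴ + t⁵·a³ + t⁶·h) is not the square of any polynomial in K[t]. -/
/-!
In characteristic 2 a square has no monomials of odd degree, whereas the coefficient of `t⁹`
in `t⁴ (a⁴ + t⁵ a³ + t⁶ h)` is `a(0)³ ≠ 0`.
-/

open Polynomial

-- `f ^ p` is the Frobenius twist of `expand R p f`.
theorem Polynomial.coeff_pow_expChar_of_not_dvd {R : Type*} [CommSemiring R] {p : ℕ}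
    [ExpChar R p] (f : R[X]) {n : ℕ} (hn : ¬ p ∣ n) : (f ^ p).coeff n = 0 := by
  rw [← map_frobenius_expand, coeff_map, coeff_expand (expChar_pos R p), if_neg hn, map_zero]

/-- Let `K` be a field of characteristic 2 and let `a, h ∈ K[t]` be polynomials with
`a(0) ≠ 0`.  Then the polynomial `t⁴ ⬝ (a⁴ + t⁵ ⬝ a³ + t⁶ ⬝ h)` is not the square of any
polynomial in `K[t]`. -/
theorem not_square_char_two (K : Type*) [Field K] [CharP K 2] (a h : K[X])
    (ha : a.eval 0 ≠ 0) :
    ¬ ∃ p : K[X], X ^ 4 * (a ^ 4 + X ^ 5 * a ^ 3 + X ^ 6 * h) = p ^ 2 := by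
  rintro ⟨p, hp⟩
  have odd_coeff_sq {q : K[X]} {n : ℕ} (hn : ¬ 2 ∣ n) : (q ^ 2).coeff n = 0 :=
    coeff_pow_expChar_of_not_dvd q hn
  have ha4 : (a ^ 4).coeff 5 = 0 := by
    rw [show a ^ 4 = (a ^ 2) ^ 2 by ring]
    exact odd_coeff_sq (by decide)
  have hcoeff : (X ^ 4 * (a ^ 4 + X ^ 5 * a ^ 3 + X ^ 6 * h)).coeff 9 = a.eval 0 ^ 3 := by
    simp [coeff_X_pow_mul', ha4, coeff_zero_eq_eval_zero]
  apply pow_ne_zero 3 ha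
  rw [← hcoeff, hp]
  exact odd_coeff_sq (by decide)
end

section
/- For all integers r ≥ 1 and m ≥ 1, any embedding A₁ʳ ↪ D_{2m+1} factors through D_{2m}: if v₁,…,v_r ∈ D_{2m+1} are pairwise orthogonal roots, then there exists a subgroup L of D_{2m+1} containing all the vᵢ such that L, with the bilinear form restricted from D_{2m+1}, is isometric to the lattice D_{2m}. -/
/-! A root of `ℤⁿ` has exactly two nonzero coordinates, and two orthogonal roots have equal or
disjoint supports: a single common coordinate would contribute a lone nonzero term to their inner
product. The supports of pairwise orthogonal roots therefore cover an even number of coordinates,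
so in odd dimension `2m + 1` some coordinate vanishes on all of them. The vectors of `D_{2m+1}`
vanishing at that coordinate form a copy of `D_{2m}`. -/

/-- The lattice `Dₙ`: the subgroup `{x ∈ ℤⁿ : x₁ + ⋯ + xₙ is even}` of `ℤⁿ`,
equipped (implicitly) with the standard Euclidean bilinear form `⟨x,y⟩ = ∑ xᵢyᵢ`. -/
def DLat (n : ℕ) : AddSubgroup (Fin n → ℤ) where
  carrier := {x | Even (∑ i, x i)}
  zero_mem' := by simp
  add_mem' := by
    intro a b ha hb
    simpa [Finset.sum_add_distrib] using ha.add hb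
  neg_mem' := by
    intro a ha
    simpa using ha.neg

open Finset

section Roots

variable {ι : Type*} [Fintype ι]

def coordSupport (w : ι → ℤ) : Finset ι := {i | w i ≠ 0}

@[simp]
lemma mem_coordSupport {w : ι → ℤ} {i : ι} : i ∈ coordSupport w ↔ w i ≠ 0 := by
  simp [coordSupport]

lemma mul_self_eq_one_of_sum_mul_self_eq_two {w : ι → ℤ} (hw : ∑ i, w i * w i = 2) {i : ι}
    (hi : w i ≠ 0) : w i * w i = 1 := by
  have hle : w i * w i ≤ 2 :=
    hw ▸ single_le_sum (fun j _ => mul_self_nonneg (w j)) (mem_univ i)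
  have h1 : -1 ≤ w i := by nlinarith
  have h2 : w i ≤ 1 := by nlinarith
  interval_cases (w i) <;> simp_all

lemma card_coordSupport_of_sum_mul_self_eq_two {w : ι → ℤ} (hw : ∑ i, w i * w i = 2) :
    #(coordSupport w) = 2 := by
  have : ∑ i with w i ≠ 0, w i * w i = #(coordSupport w) := by
    rw [card_eq_sum_ones, Nat.cast_sum, Nat.cast_one]
    exact sum_congr rfl fun i hi =>
      mul_self_eq_one_of_sum_mul_self_eq_two hw (mem_filter.mp hi).2
  rw [sum_filter_of_ne fun i _ h => left_ne_zero_of_mul h, hw] at this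
  exact_mod_cast this.symm

lemma coordSupport_eq_or_disjoint_of_orthogonal_roots {w u : ι → ℤ}
    (hw : ∑ i, w i * w i = 2) (hu : ∑ i, u i * u i = 2) (hwu : ∑ i, w i * u i = 0) :
    coordSupport w = coordSupport u ∨ Disjoint (coordSupport w) (coordSupport u) := by
  classical
  set sw := coordSupport w
  set su := coordSupport u
  refine or_iff_not_imp_right.mpr fun hnd => by_contra fun hne => ?_
  have hcw : #sw = 2 := card_coordSupport_of_sum_mul_self_eq_two hw
  have hcu : #su = 2 := card_coordSupport_of_sum_mul_self_eq_two hu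
  have hpos : 0 < #(sw ∩ su) := card_pos.mpr (not_disjoint_iff_nonempty_inter.mp hnd)
  have hne2 : #(sw ∩ su) ≠ 2 := fun h2 => hne <|
    (eq_of_subset_of_card_le (inter_subset_left : sw ∩ su ⊆ sw) (by omega)).symm.trans
      (eq_of_subset_of_card_le (inter_subset_right : sw ∩ su ⊆ su) (by omega))
  have hle : #(sw ∩ su) ≤ 2 := hcw ▸ card_le_card inter_subset_left
  obtain ⟨i, hi⟩ := card_eq_one.mp (show #(sw ∩ su) = 1 by omega)
  have hiwu : w i ≠ 0 ∧ u i ≠ 0 := by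
    simpa [sw, su] using (hi ▸ mem_singleton_self i : i ∈ sw ∩ su)
  -- the lone common coordinate `i` is the only nonzero term of the inner product
  have : ∑ j, w j * u j = w i * u i := sum_eq_single i (fun j _ hji => by
    have : j ∉ sw ∩ su := by rw [hi]; simpa using hji
    simp only [sw, su, mem_inter, mem_coordSupport, not_and_or, not_not] at this
    rcases this with h | h <;> simp [h]) (by simp)
  exact mul_ne_zero hiwu.1 hiwu.2 (this ▸ hwu)

lemma exists_forall_eq_zero_of_orthogonal_roots (hι : Odd (Fintype.card ι)) {κ : Type*}
    (v : κ → ι → ℤ) (hroot : ∀ k, ∑ i, v k i * v k i = 2)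
    (horth : ∀ k l, k ≠ l → ∑ i, v k i * v l i = 0) :
    ∃ i, ∀ k, v k i = 0 := by
  classical
  let T : Finset (Finset ι) := {s | ∃ k, coordSupport (v k) = s}
  have hdisj : (T : Set (Finset ι)).PairwiseDisjoint id := by
    rintro _ hk _ hl hne
    obtain ⟨k, rfl⟩ := (mem_filter.mp hk).2
    obtain ⟨l, rfl⟩ := (mem_filter.mp hl).2
    exact (coordSupport_eq_or_disjoint_of_orthogonal_roots (hroot k) (hroot l)
      (horth k l fun h => hne (h ▸ rfl))).resolve_left hne
  have hcard : #(T.biUnion id) = 2 * #T := by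
    rw [card_biUnion hdisj, mul_comm, ← smul_eq_mul, ← sum_const]
    refine sum_congr rfl fun s hs => ?_
    obtain ⟨k, rfl⟩ := (mem_filter.mp hs).2
    exact card_coordSupport_of_sum_mul_self_eq_two (hroot k)
  obtain ⟨i, hi⟩ : ∃ i, i ∉ T.biUnion id := by
    by_contra! h
    rw [eq_univ_of_forall h, card_univ] at hcard
    exact Nat.not_odd_iff_even.mpr ⟨#T, by omega⟩ hι
  refine ⟨i, fun k => by_contra fun hk => hi ?_⟩
  exact mem_biUnion.mpr ⟨coordSupport (v k), mem_filter.mpr ⟨mem_univ _, k, rfl⟩, by simpa⟩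

end Roots

lemma Fin.sum_univ_eq_sum_succAbove_of_eq_zero {M : Type*} [AddCommMonoid M] {n : ℕ}
    {i₀ : Fin (n + 1)} {f : Fin (n + 1) → M} (hf : f i₀ = 0) :
    ∑ i, f i = ∑ j, f (i₀.succAbove j) := by
  rw [Fin.sum_univ_succAbove f i₀, hf, zero_add]

namespace DLat

variable {n : ℕ}

def slice (i₀ : Fin (n + 1)) : AddSubgroup (Fin (n + 1) → ℤ) :=
  DLat (n + 1) ⊓ (Pi.evalAddMonoidHom (fun _ => ℤ) i₀).ker

lemma mem_slice {i₀ : Fin (n + 1)} {x : Fin (n + 1) → ℤ} :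
    x ∈ slice i₀ ↔ x ∈ DLat (n + 1) ∧ x i₀ = 0 := Iff.rfl

def sliceEquiv (i₀ : Fin (n + 1)) : slice i₀ ≃+ DLat n where
  toFun x := ⟨i₀.removeNth x.1, by
    have hx := mem_slice.mp x.2
    change Even (∑ j, x.1 (i₀.succAbove j))
    rw [← Fin.sum_univ_eq_sum_succAbove_of_eq_zero hx.2]
    exact hx.1⟩
  invFun y := ⟨i₀.insertNth 0 y.1, mem_slice.mpr ⟨by
    change Even _
    rw [Fin.sum_univ_eq_sum_succAbove_of_eq_zero (Fin.insertNth_apply_same _ _ _)]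
    simp only [Fin.insertNth_apply_succAbove]
    exact y.2, Fin.insertNth_apply_same _ _ _⟩⟩
  left_inv x := Subtype.ext <| by simp [← (mem_slice.mp x.2).2]
  right_inv y := Subtype.ext <| by simp
  map_add' _ _ := rfl

lemma sliceEquiv_apply (i₀ : Fin (n + 1)) (x : slice i₀) (j : Fin n) :
    (sliceEquiv i₀ x : Fin n → ℤ) j = (x : Fin (n + 1) → ℤ) (i₀.succAbove j) := rfl

lemma sum_mul_sliceEquiv (i₀ : Fin (n + 1)) (x y : slice i₀) :
    ∑ i, (x : Fin (n + 1) → ℤ) i * (y : Fin (n + 1) → ℤ) i =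
      ∑ j, (sliceEquiv i₀ x : Fin n → ℤ) j * (sliceEquiv i₀ y : Fin n → ℤ) j := by
  simp only [sliceEquiv_apply]
  exact Fin.sum_univ_eq_sum_succAbove_of_eq_zero (by simp [(mem_slice.mp x.2).2])

end DLat

theorem orthogonal_roots_factor_through_D2m_general (r m : ℕ)
    (v : Fin r → (Fin (2 * m + 1) → ℤ))
    (hmem : ∀ k, v k ∈ DLat (2 * m + 1))
    (hroot : ∀ k, ∑ i, v k i * v k i = 2)
    (horth : ∀ k l, k ≠ l → ∑ i, v k i * v l i = 0) :
    ∃ L : AddSubgroup (Fin (2 * m + 1) → ℤ), L ≤ DLat (2 * m + 1) ∧ (∀ k, v k ∈ L) ∧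
      ∃ e : L ≃+ DLat (2 * m), ∀ x y : L,
        ∑ i, (x : Fin (2 * m + 1) → ℤ) i * (y : Fin (2 * m + 1) → ℤ) i =
          ∑ i, (e x : Fin (2 * m) → ℤ) i * (e y : Fin (2 * m) → ℤ) i := by
  obtain ⟨i₀, hi₀⟩ := exists_forall_eq_zero_of_orthogonal_roots (by simp) v hroot horth
  exact ⟨DLat.slice i₀, inf_le_left, fun k => DLat.mem_slice.mpr ⟨hmem k, hi₀ k⟩,
    DLat.sliceEquiv i₀, DLat.sum_mul_sliceEquiv i₀⟩

/-- For all integers `r ≥ 1` and `m ≥ 1`, any embedding `A₁ʳ ↪ D_{2m+1}` factors through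
`D_{2m}`: if `v₁,…,v_r ∈ D_{2m+1}` are pairwise orthogonal roots, then there exists a
subgroup `L` of `D_{2m+1}` containing all the `vᵢ` such that `L`, with the bilinear form
restricted from `D_{2m+1}`, is isometric to the lattice `D_{2m}`. -/
theorem orthogonal_roots_factor_through_D2m (r m : ℕ) (hr : 1 ≤ r) (hm : 1 ≤ m)
    (v : Fin r → (Fin (2 * m + 1) → ℤ))
    (hmem : ∀ k, v k ∈ DLat (2 * m + 1))
    (hroot : ∀ k, ∑ i, v k i * v k i = 2)
    (horth : ∀ k l, k ≠ l → ∑ i, v k i * v l i = 0) :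
    ∃ L : AddSubgroup (Fin (2 * m + 1) → ℤ), L ≤ DLat (2 * m + 1) ∧ (∀ k, v k ∈ L) ∧
      ∃ e : L ≃+ DLat (2 * m), ∀ x y : L,
        ∑ i, (x : Fin (2 * m + 1) → ℤ) i * (y : Fin (2 * m + 1) → ℤ) i =
          ∑ i, (e x : Fin (2 * m) → ℤ) i * (e y : Fin (2 * m) → ℤ) i :=
  orthogonal_roots_factor_through_D2m_general r m v hmem hroot horth
end

section
/- For every integer m ≥ 1, any sublattice of D_{2m+1} isometric to D_{2m} is primitively embedded: if L is a subgroup of D_{2m+1} which, with the restricted bilinear form, is isometric to D_{2m}, then the quotient group D_{2m+1}/L is torsion-free. -/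
/-!
Let `x ∈ D_{2m+1}` with `n • x ∈ L`, and let `a ∈ D_{2m}` correspond to `n • x`. As `a` pairs
with `D_{2m}` into `nℤ`, `a / n` lies in the dual lattice `ℤ^{2m} ∪ (ℤ^{2m} + ½𝟙)`. If `a / n` is
integral, its norm is the even number `⟨x, x⟩`, so `a / n ∈ D_{2m}` and it corresponds to `x`.
Otherwise `2x ∈ L` corresponds to a vector `c` with all coordinates odd, and
`L + ℤx ≅ D_{2m} + ℤ·c/2` is unimodular, so the projection `p` of a basis vector `eᵢ` onto it lies
in `L + ℤx ⊆ D_{2m+1}`. Then `⟨p, p⟩ = pᵢ` is even and at least `pᵢ²`, which forces `p = 0`;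
hence `x = 0`.
-/

lemma even_dotProduct_self_iff {ι : Type*} [Fintype ι] (v : ι → ℤ) :
    Even (v ⬝ᵥ v) ↔ Even (∑ i, v i) := by
  refine Int.even_sub.mp ?_
  rw [dotProduct, ← Finset.sum_sub_distrib]
  refine Finset.even_sum _ fun i _ => ?_
  rw [← mul_sub_one]
  exact Int.even_mul_pred_self _

lemma even_dotProduct_iff_of_odd {ι : Type*} [Fintype ι] (d : ι → ℤ) {c : ι → ℤ}
    (hc : ∀ i, Odd (c i)) : Even (d ⬝ᵥ c) ↔ Even (∑ i, d i) := by
  refine Int.even_sub.mp ?_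
  rw [dotProduct, ← Finset.sum_sub_distrib]
  refine Finset.even_sum _ fun i _ => ?_
  rw [← mul_sub_one]
  exact ((hc i).sub_odd odd_one).mul_left _

lemma forall_even_or_forall_odd {ι : Type*} {c : ι → ℤ} (h : ∀ i j, Even (c i - c j)) :
    (∀ i, Even (c i)) ∨ ∀ i, Odd (c i) := by
  by_cases he : ∀ i, Even (c i)
  · exact .inl he
  · push Not at he
    obtain ⟨j, hj⟩ := he
    exact .inr fun i => by simpa using (h i j).add_odd (Int.not_even_iff_odd.mp hj)

lemma eq_zero_of_dotProduct_self_eq_apply {ι : Type*} [Fintype ι] {p : ι → ℤ} {i : ι}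
    (hp : p ⬝ᵥ p = p i) (hev : Even (p ⬝ᵥ p)) : p = 0 := by
  have hsq : p i * p i ≤ p i :=
    hp ▸ Finset.single_le_sum (fun j _ => mul_self_nonneg (p j)) (Finset.mem_univ i)
  have hi : p i = 0 := by
    have h0 : 0 ≤ p i := by nlinarith
    have h1 : p i ≤ 1 := by nlinarith
    rw [hp] at hev
    obtain ⟨r, hr⟩ := hev
    omega
  rwa [hi, dotProduct_self_eq_zero] at hp

namespace DLat

variable {k : ℕ}

lemma mem_iff {v : Fin k → ℤ} : v ∈ DLat k ↔ Even (∑ i, v i) := Iff.rfl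

lemma single_two_mem (i : Fin k) : Pi.single i 2 ∈ DLat k := by
  simp [mem_iff]

lemma single_sub_single_mem (i j : Fin k) : Pi.single i 1 - Pi.single j 1 ∈ DLat k := by
  simp [mem_iff, Finset.sum_sub_distrib]

lemma mem_of_forall_odd (hk : Even k) {c : Fin k → ℤ} (hc : ∀ i, Odd (c i)) : c ∈ DLat k := by
  rw [mem_iff, ← one_dotProduct, even_dotProduct_iff_of_odd _ hc]
  simpa using hk

lemma dvd_two_mul_of_forall_dvd_dotProduct {z : ℤ} {a : Fin k → ℤ}
    (h : ∀ b ∈ DLat k, z ∣ a ⬝ᵥ b) (i : Fin k) : z ∣ 2 * a i := by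
  simpa [dotProduct_single, mul_comm] using h _ (single_two_mem i)

lemma dvd_sub_of_forall_dvd_dotProduct {z : ℤ} {a : Fin k → ℤ}
    (h : ∀ b ∈ DLat k, z ∣ a ⬝ᵥ b) (i j : Fin k) : z ∣ a i - a j := by
  simpa [dotProduct_sub, dotProduct_single] using h _ (single_sub_single_mem i j)

/-- The dual lattice of `D_k` is `ℤ^k ∪ (ℤ^k + ½𝟙)`. -/
lemma exists_two_smul_eq_smul_of_forall_dvd_dotProduct {n : ℤ} (hn : n ≠ 0) {a : Fin k → ℤ}
    (h : ∀ b ∈ DLat k, n ∣ a ⬝ᵥ b) :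
    ∃ c : Fin k → ℤ, (2 : ℤ) • a = n • c ∧ ((∀ i, Even (c i)) ∨ ∀ i, Odd (c i)) := by
  choose c hc using dvd_two_mul_of_forall_dvd_dotProduct h
  refine ⟨c, funext fun i => by simpa using hc i, forall_even_or_forall_odd fun i j => ?_⟩
  obtain ⟨s, hs⟩ := dvd_sub_of_forall_dvd_dotProduct h i j
  exact ⟨s, mul_left_cancel₀ hn (by linear_combination -(hc i) + hc j + 2 * hs)⟩

/-- `D_k + ℤ·c/2` is unimodular. -/
lemma exists_eq_two_smul_add_smul {c w : Fin k → ℤ} (hc : ∀ i, Odd (c i))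
    (hcc : 4 ∣ c ⬝ᵥ c) (hw : ∀ b ∈ DLat k, 2 ∣ w ⬝ᵥ b) (hwc : 4 ∣ w ⬝ᵥ c) :
    ∃ d ∈ DLat k, ∃ t : ℤ, w = (2 : ℤ) • d + t • c := by
  suffices key : ∀ t : ℤ, 4 ∣ t * (c ⬝ᵥ c) → (∀ i, Even (w i - t * c i)) →
      ∃ d ∈ DLat k, w = (2 : ℤ) • d + t • c by
    rcases forall_even_or_forall_odd fun i j => even_iff_two_dvd.mpr
        (dvd_sub_of_forall_dvd_dotProduct hw i j) with he | ho
    · obtain ⟨d, hd, rfl⟩ := key 0 (by simp) (by simpa using he)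
      exact ⟨d, hd, 0, rfl⟩
    · obtain ⟨d, hd, rfl⟩ :=
        key 1 (by simpa using hcc) fun i => by simpa using (ho i).sub_odd (hc i)
      exact ⟨d, hd, 1, rfl⟩
  intro t htc ht
  choose d hd using ht
  have hwd : w = (2 : ℤ) • d + t • c := funext fun i => by simp; linarith [hd i]
  refine ⟨d, ?_, hwd⟩
  rw [mem_iff, ← even_dotProduct_iff_of_odd _ hc]
  have hdot : w ⬝ᵥ c = 2 * (d ⬝ᵥ c) + t * (c ⬝ᵥ c) := by
    simp only [hwd, add_dotProduct, smul_dotProduct, smul_eq_mul]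
  obtain ⟨u, hu⟩ := hwc
  obtain ⟨v, hv⟩ := htc
  exact ⟨u - v, by omega⟩

lemma exists_dotProduct_eq_two_mul (g : DLat k →+ ℤ) :
    ∃ w : Fin k → ℤ, ∀ b : DLat k, w ⬝ᵥ b = 2 * g b := by
  refine ⟨fun j => g ⟨Pi.single j 2, single_two_mem j⟩, fun b => ?_⟩
  have hb : (2 : ℤ) • b = ∑ j, (b : Fin k → ℤ) j • ⟨Pi.single j 2, single_two_mem j⟩ := by
    ext i
    simp [Finset.sum_apply, Pi.single_apply, mul_comm]
  rw [← smul_eq_mul, ← map_zsmul, hb, map_sum]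
  simp [dotProduct, mul_comm]

variable {N : ℕ}

/-- `range f + ℤx` is unimodular (it is `D_k + ℤ·c/2` via `f`), so the `i`-th coordinate functional
on it is represented by one of its vectors. -/
theorem exists_dotProduct_map_eq_apply (f : DLat k →+ (Fin N → ℤ))
    (hf : ∀ b b', f b ⬝ᵥ f b' = (b : Fin k → ℤ) ⬝ᵥ b') (hfD : ∀ b, f b ∈ DLat N)
    {c : DLat k} (hc : ∀ i, Odd ((c : Fin k → ℤ) i)) {x : Fin N → ℤ} (hx : x ∈ DLat N)
    (hcx : f c = (2 : ℤ) • x) (i : Fin N) :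
    ∃ p ∈ DLat N, p ⬝ᵥ p = p i ∧ ∀ b, p ⬝ᵥ f b = f b i := by
  obtain ⟨w, hw⟩ := exists_dotProduct_eq_two_mul ((Pi.evalAddMonoidHom _ i).comp f)
  have hcc : 4 ∣ (c : Fin k → ℤ) ⬝ᵥ c := ⟨x ⬝ᵥ x, by
    rw [← hf, hcx]
    simp only [smul_dotProduct, dotProduct_smul, smul_eq_mul]
    ring⟩
  obtain ⟨d, hd, t, rfl⟩ := exists_eq_two_smul_add_smul hc hcc (fun b hb => ⟨_, hw ⟨b, hb⟩⟩)
    ⟨x i, by simp [hw c, hcx]; ring⟩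
  have hp : ∀ b, (f ⟨d, hd⟩ + t • x) ⬝ᵥ f b = f b i := by
    intro b
    have h := hw b
    have h2 := hf c b
    have h3 := hf ⟨d, hd⟩ b
    simp only [add_dotProduct, smul_dotProduct, smul_eq_mul, hcx] at h h2 h3 ⊢
    simp only [AddMonoidHom.coe_comp, Function.comp_apply, Pi.evalAddMonoidHom_apply] at h
    refine mul_left_cancel₀ (two_ne_zero (α := ℤ)) ?_
    linear_combination h + 2 * h3 + t * h2
  have hpx : (f ⟨d, hd⟩ + t • x) ⬝ᵥ x = x i := by
    have h := hp c
    rw [hcx, dotProduct_smul, smul_eq_mul, Pi.smul_apply, smul_eq_mul] at h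
    exact mul_left_cancel₀ two_ne_zero h
  refine ⟨_, (DLat N).add_mem (hfD _) ((DLat N).zsmul_mem hx t), ?_, hp⟩
  simp only [dotProduct_add, dotProduct_smul, smul_eq_mul, hp, hpx, Pi.add_apply, Pi.smul_apply]

theorem eq_zero_of_map_eq_two_smul (f : DLat k →+ (Fin N → ℤ))
    (hf : ∀ b b', f b ⬝ᵥ f b' = (b : Fin k → ℤ) ⬝ᵥ b') (hfD : ∀ b, f b ∈ DLat N)
    {c : DLat k} (hc : ∀ i, Odd ((c : Fin k → ℤ) i)) {x : Fin N → ℤ} (hx : x ∈ DLat N)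
    (hcx : f c = (2 : ℤ) • x) : x = 0 := by
  funext i
  obtain ⟨p, hpD, hpp, hp⟩ := exists_dotProduct_map_eq_apply f hf hfD hc hx hcx i
  have hp0 : p = 0 :=
    eq_zero_of_dotProduct_self_eq_apply hpp ((even_dotProduct_self_iff p).mpr hpD)
  have h := hp c
  rw [hp0, zero_dotProduct, hcx] at h
  simpa using h.symm

theorem mem_range_of_nsmul_mem_range (hk : Even k) (f : DLat k →+ (Fin N → ℤ))
    (hf : ∀ b b', f b ⬝ᵥ f b' = (b : Fin k → ℤ) ⬝ᵥ b') (hfD : ∀ b, f b ∈ DLat N)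
    {x : Fin N → ℤ} (hx : x ∈ DLat N) {n : ℕ} (hn : n ≠ 0) (hnx : n • x ∈ f.range) :
    x ∈ f.range := by
  obtain ⟨b, hb⟩ := hnx
  rw [← natCast_zsmul] at hb
  have hn' : (n : ℤ) ≠ 0 := by exact_mod_cast hn
  have hdvd : ∀ b' ∈ DLat k, (n : ℤ) ∣ (b : Fin k → ℤ) ⬝ᵥ b' := fun b' hb' =>
    ⟨x ⬝ᵥ f ⟨b', hb'⟩, (hf b ⟨b', hb'⟩).symm.trans (by rw [hb, smul_dotProduct, smul_eq_mul])⟩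
  obtain ⟨c, hbc, hc | hc⟩ := exists_two_smul_eq_smul_of_forall_dvd_dotProduct hn' hdvd
  · choose a ha using hc
    have hba : (b : Fin k → ℤ) = (n : ℤ) • a := funext fun i => by
      have := congrFun hbc i
      simp only [Pi.smul_apply, smul_eq_mul, ha i] at this ⊢
      linarith
    have haD : a ∈ DLat k := by
      rw [mem_iff, ← even_dotProduct_self_iff]
      have : (n : ℤ) ^ 2 * (a ⬝ᵥ a) = (n : ℤ) ^ 2 * (x ⬝ᵥ x) := by
        have := hf b b
        rw [hb, hba] at this
        simp only [smul_dotProduct, dotProduct_smul, smul_eq_mul] at this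
        linear_combination -this
      rw [mul_left_cancel₀ (pow_ne_zero 2 hn') this, even_dotProduct_self_iff]
      exact hx
    refine ⟨⟨a, haD⟩, smul_right_injective _ hn' ?_⟩
    simp only [← map_zsmul, ← hb]
    congr 1
    exact Subtype.ext hba.symm
  · have hcx : f ⟨c, mem_of_forall_odd hk hc⟩ = (2 : ℤ) • x := smul_right_injective _ hn' <| by
      simp only [← map_zsmul, smul_comm (n : ℤ) (2 : ℤ) x, ← hb]
      congr 1
      exact Subtype.ext hbc.symm
    rw [eq_zero_of_map_eq_two_smul f hf hfD hc hx hcx]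
    exact zero_mem _

end DLat

lemma QuotientAddGroup.not_isOfFinAddOrder_of_forall_nsmul_mem {G : Type*} [AddCommGroup G]
    {K : AddSubgroup G} (hK : ∀ g : G, ∀ n : ℕ, n ≠ 0 → n • g ∈ K → g ∈ K) {q : G ⧸ K}
    (hq : q ≠ 0) :
    ¬ IsOfFinAddOrder q := by
  induction q using QuotientAddGroup.induction_on with
  | H g =>
    rintro h
    obtain ⟨n, hn, hng⟩ := isOfFinAddOrder_iff_nsmul_eq_zero.mp h
    rw [← QuotientAddGroup.mk_nsmul, QuotientAddGroup.eq_zero_iff] at hng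
    exact hq ((QuotientAddGroup.eq_zero_iff g).mpr (hK g n hn.ne' hng))

theorem D2m_in_D2m1_primitive_general (m : ℕ)
    (L : AddSubgroup (Fin (2 * m + 1) → ℤ)) (hL : L ≤ DLat (2 * m + 1))
    (hiso : ∃ e : L ≃+ DLat (2 * m), ∀ x y : L,
      ∑ i, (x : Fin (2 * m + 1) → ℤ) i * (y : Fin (2 * m + 1) → ℤ) i =
        ∑ i, (e x : Fin (2 * m) → ℤ) i * (e y : Fin (2 * m) → ℤ) i) :
    ∀ g : ((DLat (2 * m + 1)) ⧸ L.addSubgroupOf (DLat (2 * m + 1))),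
      g ≠ 0 → ¬ IsOfFinAddOrder g := by
  obtain ⟨e, he⟩ := hiso
  let f : DLat (2 * m) →+ (Fin (2 * m + 1) → ℤ) := L.subtype.comp e.symm.toAddMonoidHom
  have hf : ∀ b b', f b ⬝ᵥ f b' = (b : Fin (2 * m) → ℤ) ⬝ᵥ b' := fun b b' => by
    have h := he (e.symm b) (e.symm b')
    rwa [e.apply_symm_apply, e.apply_symm_apply] at h
  have hrange : f.range = L := by
    rw [AddMonoidHom.range_comp, AddMonoidHom.range_eq_top.mpr e.symm.surjective,
      ← AddMonoidHom.range_eq_map, AddSubgroup.range_subtype]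
  refine fun g => QuotientAddGroup.not_isOfFinAddOrder_of_forall_nsmul_mem fun x n hn hnx => ?_
  rw [AddSubgroup.mem_addSubgroupOf, ← hrange] at hnx ⊢
  exact DLat.mem_range_of_nsmul_mem_range (even_two_mul m) f hf (fun b => hL (e.symm b).2) x.2
    hn hnx

/-- For every integer `m ≥ 1`, any sublattice of `D_{2m+1}` isometric to `D_{2m}` is
primitively embedded: if `L` is a subgroup of `D_{2m+1}` which, with the restricted bilinear
form, is isometric to `D_{2m}`, then the quotient group `D_{2m+1}/L` is torsion-free. -/
theorem D2m_in_D2m1_primitive (m : ℕ) (hm : 1 ≤ m)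
    (L : AddSubgroup (Fin (2 * m + 1) → ℤ)) (hL : L ≤ DLat (2 * m + 1))
    (hiso : ∃ e : L ≃+ DLat (2 * m), ∀ x y : L,
      ∑ i, (x : Fin (2 * m + 1) → ℤ) i * (y : Fin (2 * m + 1) → ℤ) i =
        ∑ i, (e x : Fin (2 * m) → ℤ) i * (e y : Fin (2 * m) → ℤ) i) :
    ∀ g : ((DLat (2 * m + 1)) ⧸ L.addSubgroupOf (DLat (2 * m + 1))),
      g ≠ 0 → ¬ IsOfFinAddOrder g :=
  D2m_in_D2m1_primitive_general m L hL hiso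
end

section
/- Let n ≥ 4 and let v be a root of the lattice D_n. Then the orthogonal complement {x ∈ D_n : ⟨x,v⟩ = 0}, with the restricted bilinear form, is isometric to the orthogonal direct sum of a rank-one lattice generated by a vector of norm 2 and the lattice D_{n−2}. -/
open Finset Matrix

theorem exists_pair_of_sum_mul_self_eq_two {ι : Type*} [Fintype ι] [DecidableEq ι] {v : ι → ℤ}
    (hv : ∑ i, v i * v i = 2) :
    ∃ a b, a ≠ b ∧ v a * v a = 1 ∧ v b * v b = 1 ∧ ∀ i, i ≠ a → i ≠ b → v i = 0 := by
  have hunit : ∀ i, v i * v i ≠ 0 → v i * v i = 1 := by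
    intro i hi
    have hle : v i * v i ≤ 2 := hv ▸ single_le_sum (fun j _ => mul_self_nonneg (v j)) (mem_univ i)
    have : -1 ≤ v i ∧ v i ≤ 1 := by constructor <;> nlinarith
    obtain h | h | h : v i = -1 ∨ v i = 0 ∨ v i = 1 := by omega
    all_goals simp_all
  set S := univ.filter fun i => v i * v i ≠ 0
  have hS : (#S : ℤ) = 2 := by
    rw [← hv, ← sum_filter_ne_zero, cast_card]
    exact sum_congr rfl fun i hi => (hunit i (mem_filter.1 hi).2).symm
  obtain ⟨a, b, hab, hSab⟩ := card_eq_two.1 (by exact_mod_cast hS)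
  have hmem : ∀ i, v i * v i ≠ 0 ↔ i = a ∨ i = b := fun i => by
    simpa [S] using congrArg (i ∈ ·) hSab
  refine ⟨a, b, hab, hunit a ((hmem a).2 (.inl rfl)), hunit b ((hmem b).2 (.inr rfl)),
    fun i hia hib => ?_⟩
  simpa using mt (hmem i).1 (not_or.2 ⟨hia, hib⟩)

theorem sum_eq_add_add_sum_of_equiv {M : Type*} [AddCommMonoid M] {n m : ℕ} {a b : Fin n}
    (hab : a ≠ b) (e : Fin m ≃ {i // i ≠ a ∧ i ≠ b}) (f : Fin n → M) :
    ∑ i, f i = f a + f b + ∑ j, f (e j) := by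
  rw [e.sum_comp (fun i => f i), ← sum_pair hab, ← sum_subtype ({a, b}ᶜ) (by simp),
    sum_add_sum_compl]

theorem card_subtype_ne_and_ne {ι : Type*} [Fintype ι] [DecidableEq ι] {a b : ι} (hab : a ≠ b) :
    Fintype.card {i // i ≠ a ∧ i ≠ b} = Fintype.card ι - 2 := by
  rw [Fintype.card_subtype, ← card_pair hab, ← card_compl]
  congr 1
  ext i
  simp

def orthogonalIn {ι : Type*} [Fintype ι] (L : AddSubgroup (ι → ℤ)) (v : ι → ℤ) :
    AddSubgroup (ι → ℤ) :=
  L ⊓ (AddMonoidHom.mk' (· ⬝ᵥ v) fun x y => add_dotProduct x y v).ker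

theorem mem_orthogonalIn {ι : Type*} [Fintype ι] {L : AddSubgroup (ι → ℤ)} {v x : ι → ℤ} :
    x ∈ orthogonalIn L v ↔ x ∈ L ∧ x ⬝ᵥ v = 0 :=
  Iff.rfl

section TwoCoordinates

variable {n m : ℕ} {v : Fin n → ℤ} {a b : Fin n}

theorem dotProduct_eq_add_of_eq_zero (hab : a ≠ b) (hv : ∀ i, i ≠ a → i ≠ b → v i = 0)
    (x : Fin n → ℤ) : x ⬝ᵥ v = x a * v a + x b * v b :=
  Fintype.sum_eq_add a b hab fun i ⟨hia, hib⟩ => by simp [hv i hia hib]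

theorem eq_neg_of_dotProduct_eq_zero (hab : a ≠ b) (hb : v b * v b = 1)
    (hv : ∀ i, i ≠ a → i ≠ b → v i = 0) {x : Fin n → ℤ} (hx : x ⬝ᵥ v = 0) :
    x b = -(v a * v b * x a) := by
  rw [dotProduct_eq_add_of_eq_zero hab hv] at hx
  linear_combination v b * hx - x b * hb

theorem even_sum_iff_even_sum_comp (hab : a ≠ b) (ha : v a * v a = 1) (hb : v b * v b = 1)
    (hv : ∀ i, i ≠ a → i ≠ b → v i = 0) (e : Fin m ≃ {i // i ≠ a ∧ i ≠ b}) {x : Fin n → ℤ}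
    (hx : x ⬝ᵥ v = 0) : Even (∑ i, x i) ↔ Even (∑ j, x (e j)) := by
  have hodd : ∀ i, v i * v i = 1 → Even (1 - v i) := fun i h =>
    odd_one.sub_odd (Int.odd_mul.1 (h ▸ odd_one)).1
  have hab_even : Even (x a + x b) := by
    rw [dotProduct_eq_add_of_eq_zero hab hv] at hx
    have : x a + x b = x a * (1 - v a) + x b * (1 - v b) := by linear_combination hx
    rw [this]
    exact ((hodd a ha).mul_left _).add ((hodd b hb).mul_left _)
  rw [sum_eq_add_add_sum_of_equiv hab e, Int.even_add]
  simp [hab_even]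

variable (v) in
def liftOrthogonal (e : Fin m ≃ {i // i ≠ a ∧ i ≠ b}) (t : ℤ) (y : Fin m → ℤ) : Fin n → ℤ :=
  fun i => if h : i = a then v a * t else if h' : i = b then -(v b * t) else y (e.symm ⟨i, h, h'⟩)

section liftOrthogonal

variable (e : Fin m ≃ {i // i ≠ a ∧ i ≠ b}) (t : ℤ) (y : Fin m → ℤ)

theorem liftOrthogonal_apply_left : liftOrthogonal v e t y a = v a * t :=
  dif_pos rfl

theorem liftOrthogonal_apply_right (hab : a ≠ b) : liftOrthogonal v e t y b = -(v b * t) := by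
  rw [liftOrthogonal, dif_neg hab.symm, dif_pos rfl]

theorem liftOrthogonal_apply_equiv (j : Fin m) : liftOrthogonal v e t y (e j) = y j := by
  rw [liftOrthogonal, dif_neg (e j).2.1, dif_neg (e j).2.2, Subtype.coe_eta, e.symm_apply_apply]

theorem liftOrthogonal_mem (hab : a ≠ b) (ha : v a * v a = 1) (hb : v b * v b = 1)
    (hv : ∀ i, i ≠ a → i ≠ b → v i = 0) (hy : y ∈ DLat m) :
    liftOrthogonal v e t y ∈ orthogonalIn (DLat n) v := by
  have hperp : liftOrthogonal v e t y ⬝ᵥ v = 0 := by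
    rw [dotProduct_eq_add_of_eq_zero hab hv, liftOrthogonal_apply_left,
      liftOrthogonal_apply_right _ _ _ hab]
    linear_combination t * ha - t * hb
  refine ⟨(even_sum_iff_even_sum_comp hab ha hb hv e hperp).2 ?_, hperp⟩
  simp only [liftOrthogonal_apply_equiv]
  exact hy

end liftOrthogonal

section orthogonalEquiv

variable (hab : a ≠ b) (ha : v a * v a = 1) (hb : v b * v b = 1)
  (hv : ∀ i, i ≠ a → i ≠ b → v i = 0) (e : Fin m ≃ {i // i ≠ a ∧ i ≠ b})

def orthogonalEquiv : orthogonalIn (DLat n) v ≃+ ℤ × DLat m where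
  toFun x := (v a * x.1 a, ⟨fun j => x.1 (e j),
    (even_sum_iff_even_sum_comp hab ha hb hv e (mem_orthogonalIn.1 x.2).2).1
      (mem_orthogonalIn.1 x.2).1⟩)
  invFun p := ⟨liftOrthogonal v e p.1 p.2, liftOrthogonal_mem e p.1 p.2 hab ha hb hv p.2.2⟩
  left_inv x := by
    ext i
    by_cases hia : i = a
    · rw [hia]
      simp only [liftOrthogonal_apply_left]
      linear_combination x.1 a * ha
    by_cases hib : i = b
    · rw [hib]
      simp only [liftOrthogonal_apply_right _ _ _ hab,
        eq_neg_of_dotProduct_eq_zero hab hb hv (mem_orthogonalIn.1 x.2).2]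
      ring
    · obtain ⟨j, rfl⟩ : ∃ j, (e j : Fin n) = i := ⟨e.symm ⟨i, hia, hib⟩, by simp⟩
      exact liftOrthogonal_apply_equiv _ _ _ j
  right_inv p := by
    ext
    · simp only [liftOrthogonal_apply_left]
      linear_combination p.1 * ha
    · simp only [liftOrthogonal_apply_equiv]
  map_add' x y := by
    ext <;> simp [mul_add]

theorem dotProduct_eq_orthogonalEquiv (x y : orthogonalIn (DLat n) v) :
    (x : Fin n → ℤ) ⬝ᵥ y =
      2 * (orthogonalEquiv hab ha hb hv e x).1 * (orthogonalEquiv hab ha hb hv e y).1 +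
        ((orthogonalEquiv hab ha hb hv e x).2 : Fin m → ℤ) ⬝ᵥ
          (orthogonalEquiv hab ha hb hv e y).2 := by
  have hx := eq_neg_of_dotProduct_eq_zero hab hb hv (mem_orthogonalIn.1 x.2).2
  have hy := eq_neg_of_dotProduct_eq_zero hab hb hv (mem_orthogonalIn.1 y.2).2
  rw [dotProduct, sum_eq_add_add_sum_of_equiv hab e, hx, hy]
  change _ = 2 * (v a * x.1 a) * (v a * y.1 a) + ∑ j, x.1 (e j) * y.1 (e j)
  linear_combination (x.1 a * y.1 a * v a * v a) * hb - (x.1 a * y.1 a) * ha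

end orthogonalEquiv

end TwoCoordinates

theorem orthogonal_complement_of_root_in_Dn_general (n : ℕ) (v : Fin n → ℤ)
    (hroot : ∑ i, v i * v i = 2) :
    ∃ K : AddSubgroup (Fin n → ℤ),
      (∀ x, x ∈ K ↔ x ∈ DLat n ∧ ∑ i, x i * v i = 0) ∧
      ∃ e : K ≃+ (ℤ × DLat (n - 2)), ∀ x y : K,
        ∑ i, (x : Fin n → ℤ) i * (y : Fin n → ℤ) i =
          2 * (e x).1 * (e y).1 +
            ∑ i, ((e x).2 : Fin (n - 2) → ℤ) i * ((e y).2 : Fin (n - 2) → ℤ) i := by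
  obtain ⟨a, b, hab, ha, hb, hv⟩ := exists_pair_of_sum_mul_self_eq_two hroot
  have e : Fin (n - 2) ≃ {i // i ≠ a ∧ i ≠ b} :=
    (Fintype.equivFinOfCardEq (by rw [card_subtype_ne_and_ne hab, Fintype.card_fin])).symm
  exact ⟨orthogonalIn (DLat n) v, fun _ => Iff.rfl, orthogonalEquiv hab ha hb hv e,
    dotProduct_eq_orthogonalEquiv hab ha hb hv e⟩

/-- Let `n ≥ 4` and let `v` be a root of the lattice `Dₙ`.  Then the orthogonal complement
`{x ∈ Dₙ : ⟨x,v⟩ = 0}`, with the restricted bilinear form, is isometric to the orthogonal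
direct sum of a rank-one lattice generated by a vector of norm 2 and the lattice `D_{n−2}`. -/
theorem orthogonal_complement_of_root_in_Dn (n : ℕ) (hn : 4 ≤ n) (v : Fin n → ℤ)
    (hv : v ∈ DLat n) (hroot : ∑ i, v i * v i = 2) :
    ∃ K : AddSubgroup (Fin n → ℤ),
      (∀ x, x ∈ K ↔ x ∈ DLat n ∧ ∑ i, x i * v i = 0) ∧
      ∃ e : K ≃+ (ℤ × DLat (n - 2)), ∀ x y : K,
        ∑ i, (x : Fin n → ℤ) i * (y : Fin n → ℤ) i =
          2 * (e x).1 * (e y).1 +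
            ∑ i, ((e x).2 : Fin (n - 2) → ℤ) i * ((e y).2 : Fin (n - 2) → ℤ) i :=
  orthogonal_complement_of_root_in_Dn_general n v hroot
end

section
/- Let v₁,…,v₆ be pairwise orthogonal roots of the lattice E₈. Let M be the ℤ-span of v₁,…,v₆ and let M' be the primitive closure of M in E₈. Then the index [M' : M] is at least 4. -/
/-- The lattice `E₈`: the subgroup of `ℚ⁸` consisting of all vectors whose coordinates are
either all integers or all half-odd-integers (all in `ℤ + ½`) and whose coordinate sum is an
even integer, equipped (implicitly) with the standard Euclidean bilinear form
`⟨x,y⟩ = ∑ xᵢyᵢ`. -/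
def E8Lat : AddSubgroup (Fin 8 → ℚ) where
  carrier := {x | ((∀ i, ∃ a : ℤ, x i = a) ∨ (∀ i, ∃ a : ℤ, x i = a + 1 / 2)) ∧
    ∃ s : ℤ, Even s ∧ ∑ i, x i = s}
  zero_mem' := ⟨Or.inl fun i => ⟨0, by simp⟩, 0, ⟨0, rfl⟩, by simp⟩
  add_mem' := by
    rintro a b ⟨ha, sa, hsa, hsuma⟩ ⟨hb, sb, hsb, hsumb⟩
    constructor
    · rcases ha with ha | ha <;> rcases hb with hb | hb
      · left; intro i
        obtain ⟨p, hp⟩ := ha i; obtain ⟨q, hq⟩ := hb i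
        exact ⟨p + q, by rw [Pi.add_apply, hp, hq]; push_cast; ring⟩
      · right; intro i
        obtain ⟨p, hp⟩ := ha i; obtain ⟨q, hq⟩ := hb i
        exact ⟨p + q, by rw [Pi.add_apply, hp, hq]; push_cast; ring⟩
      · right; intro i
        obtain ⟨p, hp⟩ := ha i; obtain ⟨q, hq⟩ := hb i
        exact ⟨p + q, by rw [Pi.add_apply, hp, hq]; push_cast; ring⟩
      · left; intro i
        obtain ⟨p, hp⟩ := ha i; obtain ⟨q, hq⟩ := hb i
        exact ⟨p + q + 1, by rw [Pi.add_apply, hp, hq]; push_cast; ring⟩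
    · refine ⟨sa + sb, hsa.add hsb, ?_⟩
      simp only [Pi.add_apply]
      rw [Finset.sum_add_distrib, hsuma, hsumb]; push_cast; ring
  neg_mem' := by
    rintro a ⟨ha, sa, hsa, hsuma⟩
    constructor
    · rcases ha with ha | ha
      · left; intro i
        obtain ⟨p, hp⟩ := ha i
        exact ⟨-p, by rw [Pi.neg_apply, hp]; push_cast; ring⟩
      · right; intro i
        obtain ⟨p, hp⟩ := ha i
        exact ⟨-p - 1, by rw [Pi.neg_apply, hp]; push_cast; ring⟩
    · refine ⟨-sa, hsa.neg, ?_⟩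
      simp only [Pi.neg_apply]
      rw [Finset.sum_neg_distrib, hsuma]; push_cast; ring

/-- The primitive closure of a subgroup `M` inside the lattice `E₈`:
`M' = {x ∈ E₈ : kx ∈ M for some nonzero integer k}`. -/
def primClosureE8 (M : AddSubgroup (Fin 8 → ℚ)) : AddSubgroup (Fin 8 → ℚ) where
  carrier := {x | x ∈ E8Lat ∧ ∃ k : ℤ, k ≠ 0 ∧ k • x ∈ M}
  zero_mem' := ⟨E8Lat.zero_mem, 1, one_ne_zero, by simpa using M.zero_mem⟩
  add_mem' := by
    rintro a b ⟨haD, k, hk, hka⟩ ⟨hbD, l, hl, hlb⟩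
    refine ⟨E8Lat.add_mem haD hbD, k * l, mul_ne_zero hk hl, ?_⟩
    have h1 : (k * l) • (a + b) = l • (k • a) + k • (l • b) := by
      rw [smul_add, smul_smul, smul_smul, mul_comm l k]
    rw [h1]
    exact M.add_mem (M.zsmul_mem hka l) (M.zsmul_mem hlb k)
  neg_mem' := by
    rintro a ⟨haD, k, hk, hka⟩
    exact ⟨E8Lat.neg_mem haD, k, hk, by simpa [smul_neg] using M.neg_mem hka⟩

/-!
Every `x` in the primitive closure `M'` of `M = ⟨v₁, …, v₆⟩` is a rational combination of the
`vₖ`, and since `⟨vₖ, vₗ⟩ = 2δₖₗ` the map `x ↦ (⟨x, vₖ⟩ mod 2)ₖ` embeds `M'/M` into `(ℤ/2)⁶`.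
To see that its image is large, write the `vₖ` in the basis of simple roots of `E₈`, whose Gram
matrix is the Cartan matrix, of determinant 1. Reduced mod 2, the coordinate vectors of the `vₖ`
span a subspace of `𝔽₂⁸` that is totally isotropic for the nondegenerate Cartan form, so it has
dimension at most 4, and the relations `c ∈ 𝔽₂⁶` among them form a space of dimension at least 2.
For each such `c`, the vector `½ ∑ cₖ vₖ` has integral simple-root coordinates, so it lies in `M'`,
and it is sent to `c`. Hence `[M' : M] ≥ 2²`.
-/

open Matrix

theorem Matrix.two_mul_rank_le_of_mul_mul_transpose_eq_zero {K m n : Type*} [Field K]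
    [Fintype m] [Fintype n] [DecidableEq n] {C : Matrix m n K} {G : Matrix n n K}
    (hG : IsUnit G.det) (h : C * G * Cᵀ = 0) : 2 * C.rank ≤ Fintype.card n := by
  have := rank_add_rank_le_card_of_mul_eq_zero h
  rwa [rank_mul_eq_left_of_isUnit_det _ _ hG, rank_transpose, ← two_mul] at this

theorem Matrix.card_ker_mulVecLin {K m n : Type*} [Field K] [Fintype K] [Fintype n]
    (A : Matrix m n K) :
    Nat.card (LinearMap.ker A.mulVecLin) = Fintype.card K ^ (Fintype.card n - A.rank) := by
  classical
  have := LinearMap.finrank_range_add_finrank_ker A.mulVecLin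
  rw [Module.finrank_fintype_fun_eq_card] at this
  rw [Nat.card_eq_fintype_card, Module.card_eq_pow_finrank (K := K), rank]
  congr 1
  omega

lemma E8Lat.exists_eq_intCast_add_half {x : Fin 8 → ℚ} (hx : x ∈ E8Lat) :
    ∃ (a : Fin 8 → ℤ) (s : ℤ), Even (∑ i, a i) ∧ ∀ i, x i = a i + s / 2 := by
  obtain ⟨hint | hhalf, t, ht, hsum⟩ := hx
  · choose a ha using hint
    refine ⟨a, 0, ?_, fun i => by simp [ha i]⟩
    have : ((∑ i, a i : ℤ) : ℚ) = t := by push_cast; simp_rw [← ha]; exact hsum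
    rwa [Int.cast_inj.1 this]
  · choose a ha using hhalf
    refine ⟨a, 1, ?_, fun i => by simp [ha i]⟩
    have : ((∑ i, a i : ℤ) : ℚ) = (t - 4 : ℤ) := by
      push_cast; simp_rw [← hsum, ha, Finset.sum_add_distrib]; norm_num
    rw [Int.cast_inj.1 this]
    exact ht.sub (by decide)

lemma E8Lat.exists_dotProduct_eq_intCast {x y : Fin 8 → ℚ} (hx : x ∈ E8Lat) (hy : y ∈ E8Lat) :
    ∃ n : ℤ, x ⬝ᵥ y = n := by
  obtain ⟨a, s, ⟨p, hp⟩, hx⟩ := E8Lat.exists_eq_intCast_add_half hx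
  obtain ⟨b, t, ⟨q, hq⟩, hy⟩ := E8Lat.exists_eq_intCast_add_half hy
  have hp' : ∑ i, (a i : ℚ) = p + p := by exact_mod_cast hp
  have hq' : ∑ i, (b i : ℚ) = q + q := by exact_mod_cast hq
  refine ⟨a ⬝ᵥ b + t * p + s * q + 2 * s * t, ?_⟩
  simp only [dotProduct, hx, hy, add_mul, mul_add, Finset.sum_add_distrib, ← Finset.sum_mul,
    ← Finset.mul_sum, hp', hq', Finset.sum_const, Finset.card_univ, Fintype.card_fin]
  push_cast
  ring

lemma E8Lat.half_intCast_mem {z : Fin 8 → ℤ} (hpar : ∀ i, Even (z i - z 0))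
    (hsum : 4 ∣ ∑ i, z i) : (fun i => (z i : ℚ) / 2) ∈ E8Lat := by
  obtain ⟨k, hk⟩ := hsum
  refine ⟨?_, 2 * k, even_two_mul k, ?_⟩
  · rcases Int.even_or_odd (z 0) with ⟨a, ha⟩ | ⟨a, ha⟩
    · refine Or.inl fun i => ?_
      obtain ⟨b, hb⟩ := hpar i
      exact ⟨b + a, by dsimp only; rw [show z i = 2 * (b + a) by linarith]; push_cast; ring⟩
    · refine Or.inr fun i => ?_
      obtain ⟨b, hb⟩ := hpar i
      exact ⟨b + a, by dsimp only; rw [show z i = 2 * (b + a) + 1 by linarith]; push_cast; ring⟩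
  · rw [← Finset.sum_div, ← Int.cast_sum, hk]
    push_cast
    ring

/-- Twice the simple roots of `E₈`, numbered as in Bourbaki (plate VII), so that their Gram
matrix is `CartanMatrix.E₈`. -/
def twiceSimpleRoots : Matrix (Fin 8) (Fin 8) ℤ :=
  !![ 1, -1, -1, -1, -1, -1, -1,  1;
      2,  2,  0,  0,  0,  0,  0,  0;
     -2,  2,  0,  0,  0,  0,  0,  0;
      0, -2,  2,  0,  0,  0,  0,  0;
      0,  0, -2,  2,  0,  0,  0,  0;
      0,  0,  0, -2,  2,  0,  0,  0;
      0,  0,  0,  0, -2,  2,  0,  0;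
      0,  0,  0,  0,  0, -2,  2,  0]

def simpleRoots : Matrix (Fin 8) (Fin 8) ℚ := (2⁻¹ : ℚ) • twiceSimpleRoots.map (Int.castRingHom ℚ)

lemma simpleRoots_mem (j : Fin 8) : simpleRoots j ∈ E8Lat := by
  have hpar : ∀ j i, Even (twiceSimpleRoots j i - twiceSimpleRoots j 0) := by decide
  have hsum : ∀ j, 4 ∣ ∑ i, twiceSimpleRoots j i := by decide
  convert E8Lat.half_intCast_mem (hpar j) (hsum j) using 1
  ext i
  simp [simpleRoots, div_eq_inv_mul]

lemma twiceSimpleRoots_mul_transpose :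
    twiceSimpleRoots * twiceSimpleRootsᵀ = 4 • CartanMatrix.E₈ := by
  decide

lemma simpleRoots_mul_transpose :
    simpleRoots * simpleRootsᵀ = CartanMatrix.E₈.map (Int.castRingHom ℚ) := by
  have h := Matrix.map_mul (L := twiceSimpleRoots) (M := twiceSimpleRootsᵀ)
    (f := Int.castRingHom ℚ)
  rw [twiceSimpleRoots_mul_transpose] at h
  rw [simpleRoots, transpose_smul, smul_mul_smul_comm, ← transpose_map, ← h]
  ext i j
  simp only [Matrix.smul_apply, map_apply, Int.coe_castRingHom]
  simp only [smul_eq_mul, nsmul_eq_mul]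
  push_cast
  ring

lemma isUnit_det_simpleRoots : IsUnit simpleRoots.det := by
  have h := congrArg det simpleRoots_mul_transpose
  rw [det_mul, det_transpose, ← RingHom.mapMatrix_apply, ← RingHom.map_det, CartanMatrix.E₈_det,
    map_one] at h
  exact IsUnit.of_mul_eq_one _ h

lemma intCast_vecMul_simpleRoots_mem (c : Fin 8 → ℤ) :
    (Int.castRingHom ℚ ∘ c) ᵥ* simpleRoots ∈ E8Lat := by
  rw [vecMul_eq_sum]
  refine sum_mem fun j _ => ?_
  simpa [Int.cast_smul_eq_zsmul] using E8Lat.zsmul_mem (simpleRoots_mem j) (c j)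

lemma exists_intCast_mul_simpleRoots {ι : Type*} (v : ι → Fin 8 → ℚ) (hmem : ∀ k, v k ∈ E8Lat) :
    ∃ C : Matrix ι (Fin 8) ℤ, C.map (Int.castRingHom ℚ) * simpleRoots = of v := by
  -- the coordinates are the pairings with the simple roots times `E₈⁻¹`, integral as `det E₈ = 1`
  choose N hN using fun k j => E8Lat.exists_dotProduct_eq_intCast (hmem k) (simpleRoots_mem j)
  have hE : IsUnit CartanMatrix.E₈.det := by rw [CartanMatrix.E₈_det]; exact isUnit_one
  have hB : IsUnit simpleRootsᵀ.det := by rw [det_transpose]; exact isUnit_det_simpleRoots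
  refine ⟨of N * CartanMatrix.E₈⁻¹, ?_⟩
  have key : (of N * CartanMatrix.E₈⁻¹).map (Int.castRingHom ℚ) * simpleRoots * simpleRootsᵀ =
      of v * simpleRootsᵀ := by
    rw [Matrix.mul_assoc, simpleRoots_mul_transpose, ← Matrix.map_mul,
      nonsing_inv_mul_cancel_right _ _ hE]
    ext k j
    rw [map_apply, mul_apply']
    exact (hN k j).symm
  rw [← mul_nonsing_inv_cancel_right _ (_ * simpleRoots) hB, key,
    mul_nonsing_inv_cancel_right _ _ hB]

/-- The pairings `⟨x, v k⟩` are integers by `E8Lat.exists_dotProduct_eq_intCast`, so taking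
numerators loses nothing. -/
def dotModTwo {ι : Type*} (v : ι → Fin 8 → ℚ) (hmem : ∀ k, v k ∈ E8Lat) :
    primClosureE8 (AddSubgroup.closure (Set.range v)) →+ (ι → ZMod 2) where
  toFun x k := ((x.1 ⬝ᵥ v k).num : ZMod 2)
  map_zero' := by ext; simp
  map_add' x y := by
    ext k
    obtain ⟨a, ha⟩ := E8Lat.exists_dotProduct_eq_intCast x.2.1 (hmem k)
    obtain ⟨b, hb⟩ := E8Lat.exists_dotProduct_eq_intCast y.2.1 (hmem k)
    simp only [AddSubgroup.coe_add, add_dotProduct, ha, hb, Pi.add_apply, ← Int.cast_add,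
      Rat.num_intCast]

section OrthogonalRoots

variable {ι : Type*} {v : ι → Fin 8 → ℚ}

lemma dotModTwo_apply_of_eq (hmem : ∀ k, v k ∈ E8Lat)
    {x : primClosureE8 (AddSubgroup.closure (Set.range v))} {k : ι} {n : ℤ}
    (h : (x : Fin 8 → ℚ) ⬝ᵥ v k = n) : dotModTwo v hmem x k = n := by
  simp [dotModTwo, h]

lemma mem_closure_range_iff_exists_vecMul [Fintype ι] {x : Fin 8 → ℚ} :
    x ∈ AddSubgroup.closure (Set.range v) ↔ ∃ n : ι → ℤ, (Int.castRingHom ℚ ∘ n) ᵥ* of v = x := by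
  rw [AddSubgroup.mem_closure_range_iff_of_fintype]
  simp only [vecMul_eq_sum, Function.comp_apply, eq_intCast, Int.cast_smul_eq_zsmul, eq_comm]
  rfl

lemma exists_vecMul_eq_of_mem_primClosureE8 [Fintype ι] {x : Fin 8 → ℚ}
    (hx : x ∈ primClosureE8 (AddSubgroup.closure (Set.range v))) :
    ∃ q : ι → ℚ, q ᵥ* of v = x := by
  obtain ⟨-, k, hk, hkx⟩ := hx
  obtain ⟨n, hn⟩ := mem_closure_range_iff_exists_vecMul.1 hkx
  refine ⟨(k : ℚ)⁻¹ • (Int.castRingHom ℚ ∘ n), ?_⟩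
  rw [smul_vecMul, hn, ← Int.cast_smul_eq_zsmul ℚ, smul_smul,
    inv_mul_cancel₀ (by exact_mod_cast hk), one_smul]

lemma vecMul_dotProduct_of_orthogonal [Fintype ι] [DecidableEq ι]
    (hv : ∀ k l, v k ⬝ᵥ v l = if k = l then 2 else 0) (q : ι → ℚ) (l : ι) :
    (q ᵥ* of v) ⬝ᵥ v l = 2 * q l := by
  have : of v *ᵥ v l = Pi.single l 2 := by
    ext k
    simp [mulVec, hv, Pi.single_apply]
  rw [← dotProduct_mulVec, this, dotProduct_single, mul_comm]

lemma addSubgroupOf_primClosureE8_eq_ker [Fintype ι] [DecidableEq ι] (hmem : ∀ k, v k ∈ E8Lat)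
    (hv : ∀ k l, v k ⬝ᵥ v l = if k = l then 2 else 0) :
    (AddSubgroup.closure (Set.range v)).addSubgroupOf
        (primClosureE8 (AddSubgroup.closure (Set.range v))) = (dotModTwo v hmem).ker := by
  ext ⟨x, hxP⟩
  rw [AddSubgroup.mem_addSubgroupOf, AddMonoidHom.mem_ker, funext_iff,
    mem_closure_range_iff_exists_vecMul]
  constructor
  · rintro ⟨n, rfl⟩ l
    rw [dotModTwo_apply_of_eq hmem (n := 2 * n l)
      (by rw [vecMul_dotProduct_of_orthogonal hv]; simp)]
    simp [show (2 : ZMod 2) = 0 from rfl]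
  · intro h
    obtain ⟨q, rfl⟩ := exists_vecMul_eq_of_mem_primClosureE8 hxP
    have hq : ∀ l, ∃ m : ℤ, q l = m := by
      intro l
      obtain ⟨a, ha⟩ := E8Lat.exists_dotProduct_eq_intCast hxP.1 (hmem l)
      have h2 : (a : ZMod 2) = 0 := by
        rw [← dotModTwo_apply_of_eq hmem (x := ⟨_, hxP⟩) ha]
        exact h l
      obtain ⟨m, rfl⟩ := (ZMod.intCast_zmod_eq_zero_iff_dvd a 2).1 h2
      refine ⟨m, ?_⟩
      rw [vecMul_dotProduct_of_orthogonal hv] at ha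
      push_cast at ha
      linarith
    choose m hm using hq
    exact ⟨m, by congr; ext; simp [hm]⟩

variable {C : Matrix ι (Fin 8) ℤ}

lemma half_vecMul_mem_of_dvd [Fintype ι] (hC : C.map (Int.castRingHom ℚ) * simpleRoots = of v)
    {n : ι → ℤ} (hn : ∀ j, 2 ∣ (n ᵥ* C) j) : (fun k => (n k : ℚ) / 2) ᵥ* of v ∈ E8Lat := by
  choose m hm using hn
  convert intCast_vecMul_simpleRoots_mem m using 1
  rw [← hC, ← vecMul_vecMul]
  congr 1
  ext j
  have := congrArg (Int.cast : ℤ → ℚ) (hm j)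
  simp only [vecMul, dotProduct, map_apply, Function.comp_apply, eq_intCast, Int.cast_sum,
    Int.cast_mul, Int.cast_ofNat] at this ⊢
  simp_rw [div_mul_eq_mul_div, ← Finset.sum_div, this]
  ring

lemma map_mul_E₈_mul_transpose_eq_zero [DecidableEq ι]
    (hv : ∀ k l, v k ⬝ᵥ v l = if k = l then 2 else 0)
    (hC : C.map (Int.castRingHom ℚ) * simpleRoots = of v) :
    C.map (Int.castRingHom (ZMod 2)) * CartanMatrix.E₈.map (Int.castRingHom (ZMod 2)) *
      (C.map (Int.castRingHom (ZMod 2)))ᵀ = 0 := by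
  have hgram : (C * CartanMatrix.E₈ * Cᵀ).map (Int.castRingHom ℚ) = of v * (of v)ᵀ := by
    rw [Matrix.map_mul, Matrix.map_mul, ← simpleRoots_mul_transpose, transpose_map, ← hC,
      transpose_mul]
    simp only [Matrix.mul_assoc]
  rw [← transpose_map, ← Matrix.map_mul, ← Matrix.map_mul]
  ext k l
  have hkl : ((C * CartanMatrix.E₈ * Cᵀ) k l : ℚ) = v k ⬝ᵥ v l := congrFun (congrFun hgram k) l
  rw [hv] at hkl
  rw [map_apply, Matrix.zero_apply]
  split_ifs at hkl
  · rw [show (C * CartanMatrix.E₈ * Cᵀ) k l = 2 by exact_mod_cast hkl]; rfl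
  · rw [show (C * CartanMatrix.E₈ * Cᵀ) k l = 0 by exact_mod_cast hkl]; rfl

lemma mem_range_dotModTwo_of_vecMul_eq_zero [Fintype ι] [DecidableEq ι]
    (hmem : ∀ k, v k ∈ E8Lat) (hv : ∀ k l, v k ⬝ᵥ v l = if k = l then 2 else 0)
    (hC : C.map (Int.castRingHom ℚ) * simpleRoots = of v) {c : ι → ZMod 2}
    (hc : c ᵥ* C.map (Int.castRingHom (ZMod 2)) = 0) : c ∈ (dotModTwo v hmem).range := by
  set n : ι → ℤ := fun k => (c k).val
  have hn : Int.castRingHom (ZMod 2) ∘ n = c := by ext k; simp [n]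
  have hdvd : ∀ j, 2 ∣ (n ᵥ* C) j := by
    refine fun j => (ZMod.intCast_zmod_eq_zero_iff_dvd _ 2).1 ?_
    rw [← eq_intCast (Int.castRingHom (ZMod 2)), RingHom.map_vecMul, hn, hc, Pi.zero_apply]
  refine ⟨(⟨_, half_vecMul_mem_of_dvd hC hdvd, 2, two_ne_zero, ?_⟩ :
    primClosureE8 (AddSubgroup.closure (Set.range v))), ?_⟩
  · rw [mem_closure_range_iff_exists_vecMul]
    refine ⟨n, ?_⟩
    rw [← smul_vecMul]
    congr 1
    ext k
    simp [mul_div_cancel₀]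
  · ext l
    rw [dotModTwo_apply_of_eq hmem (n := n l) (by rw [vecMul_dotProduct_of_orthogonal hv]; ring)]
    exact congrFun hn l

theorem E8Lat.two_pow_le_index_primClosureE8 [Fintype ι] [DecidableEq ι]
    (hmem : ∀ k, v k ∈ E8Lat) (hv : ∀ k l, v k ⬝ᵥ v l = if k = l then 2 else 0) :
    2 ^ (Fintype.card ι - 4) ≤ ((AddSubgroup.closure (Set.range v)).addSubgroupOf
        (primClosureE8 (AddSubgroup.closure (Set.range v)))).index := by
  obtain ⟨C, hC⟩ := exists_intCast_mul_simpleRoots v hmem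
  set C₂ := C.map (Int.castRingHom (ZMod 2))
  have hE : IsUnit (CartanMatrix.E₈.map (Int.castRingHom (ZMod 2))).det := by
    rw [← RingHom.mapMatrix_apply, ← RingHom.map_det, CartanMatrix.E₈_det, map_one]
    exact isUnit_one
  have hrank : 2 * C₂.rank ≤ 8 := by
    have := two_mul_rank_le_of_mul_mul_transpose_eq_zero hE (map_mul_E₈_mul_transpose_eq_zero hv hC)
    rwa [Fintype.card_fin] at this
  rw [addSubgroupOf_primClosureE8_eq_ker hmem hv, AddSubgroup.index_ker]
  calc 2 ^ (Fintype.card ι - 4) ≤ 2 ^ (Fintype.card ι - C₂ᵀ.rank) :=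
        Nat.pow_le_pow_right two_pos (by rw [rank_transpose]; omega)
    _ = Nat.card (LinearMap.ker C₂ᵀ.mulVecLin) := by rw [card_ker_mulVecLin, ZMod.card]
    _ ≤ Nat.card (dotModTwo v hmem).range :=
      AddSubgroup.card_le_of_le (H := (LinearMap.ker C₂ᵀ.mulVecLin).toAddSubgroup) fun c hc =>
        mem_range_dotModTwo_of_vecMul_eq_zero hmem hv hC (by
          rwa [Submodule.mem_toAddSubgroup, LinearMap.mem_ker, mulVecLin_apply,
            mulVec_transpose] at hc)

end OrthogonalRoots

/-- Let `v₁,…,v₆` be pairwise orthogonal roots of the lattice `E₈`.  Let `M` be the `ℤ`-span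
of `v₁,…,v₆` and let `M'` be the primitive closure of `M` in `E₈`.  Then the index `[M' : M]`
is at least 4. -/
theorem index_primitive_closure_E8 (v : Fin 6 → (Fin 8 → ℚ))
    (hmem : ∀ k, v k ∈ E8Lat)
    (hroot : ∀ k, ∑ i, v k i * v k i = 2)
    (horth : ∀ k l, k ≠ l → ∑ i, v k i * v l i = 0) :
    4 ≤ ((AddSubgroup.closure (Set.range v)).addSubgroupOf
        (primClosureE8 (AddSubgroup.closure (Set.range v)))).index := by
  have hv : ∀ k l, v k ⬝ᵥ v l = if k = l then 2 else 0 := by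
    intro k l
    split_ifs with h
    · exact h ▸ hroot k
    · exact horth k l h
  simpa using E8Lat.two_pow_le_index_primClosureE8 hmem hv
end

section
/- Let 1 ≤ r ≤ 7 and let M = ℤʳ equipped with the bilinear form ⟨x,y⟩ = 2·Σ xᵢyᵢ (the lattice A₁ʳ). Let x ∈ ℚʳ be such that ⟨x,m⟩ ∈ ℤ for all m ∈ M (equivalently all coordinates of x lie in ½ℤ), x ∉ ℤʳ, and ⟨x,x⟩ ∈ 2ℤ. Then there exists y ∈ ℚʳ with y − x ∈ ℤʳ and ⟨y,y⟩ = 2. In other words, for r < 8 every nonzero isotropic element of the discriminant group of A₁ʳ is represented by a root. -/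
/-! Pairing `x` with the unit vectors shows that every coordinate is a half-integer, so the
coordinatewise fractional part `y := fract ∘ x` differs from `x` by a lattice vector and
`∑ yᵢ² = k / 4`, where `k` is the number of non-integral coordinates. Since
`xᵢ² - fract(xᵢ)² ∈ ℤ`, isotropy of `x` makes `k / 4` an integer, and `0 < k ≤ r ≤ 7` leaves
only `k = 4`, i.e. `⟨y, y⟩ = 2`. -/

open Finset

theorem exists_sq_sub_fract_sq_eq_intCast {K : Type*} [CommRing K] [LinearOrder K] [FloorRing K]
    {q : K} {a : ℤ} (h : 2 * q = a) :
    ∃ n : ℤ, q ^ 2 - Int.fract q ^ 2 = n :=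
  -- `q² - fract(q)² = (q - fract q)(q + fract q) = ⌊q⌋ (2q - ⌊q⌋)`
  ⟨⌊q⌋ * (a - ⌊q⌋), by rw [← Int.self_sub_floor]; push_cast; rw [← h]; ring⟩

section HalfIntegers

variable {K : Type*} [Field K] [LinearOrder K] [FloorRing K]

theorem Int.fract_eq_zero_or_half_of_two_mul_eq_intCast [IsStrictOrderedRing K] {q : K} {a : ℤ}
    (h : 2 * q = a) :
    Int.fract q = 0 ∨ Int.fract q = 1 / 2 := by
  have h2f : 2 * Int.fract q = ((a - 2 * ⌊q⌋ : ℤ) : K) := by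
    rw [← Int.self_sub_floor]; push_cast; rw [← h]; ring
  have hlo : (0 : K) ≤ (a - 2 * ⌊q⌋ : ℤ) := by rw [← h2f]; linarith [Int.fract_nonneg q]
  have hhi : ((a - 2 * ⌊q⌋ : ℤ) : K) < 2 := by rw [← h2f]; linarith [Int.fract_lt_one q]
  have hk : a - 2 * ⌊q⌋ = 0 ∨ a - 2 * ⌊q⌋ = 1 := by
    have : 0 ≤ a - 2 * ⌊q⌋ := by exact_mod_cast hlo
    have : a - 2 * ⌊q⌋ < 2 := by exact_mod_cast hhi
    omega
  rcases hk with hzero | hone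
  · left; rw [hzero] at h2f; simpa using h2f
  · right; rw [hone] at h2f; push_cast at h2f; linarith

variable {ι : Type*} [Fintype ι] {x : ι → K}

theorem sum_fract_sq_eq_card_div_four [IsStrictOrderedRing K]
    (hx : ∀ i, ∃ a : ℤ, 2 * x i = a) :
    ∑ i, Int.fract (x i) ^ 2 = #{i | Int.fract (x i) ≠ 0} / 4 := by
  classical
  rw [card_filter, Nat.cast_sum, sum_div]
  refine sum_congr rfl fun i _ => ?_
  obtain ⟨a, ha⟩ := hx i
  rcases Int.fract_eq_zero_or_half_of_two_mul_eq_intCast ha with h | h <;> norm_num [h]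

theorem four_dvd_card_fract_ne_zero [IsStrictOrderedRing K]
    (hx : ∀ i, ∃ a : ℤ, 2 * x i = a) {z : ℤ} (hz : ∑ i, x i ^ 2 = z) :
    4 ∣ #{i | Int.fract (x i) ≠ 0} := by
  choose n hn using fun i => exists_sq_sub_fract_sq_eq_intCast (hx i).choose_spec
  have hcard : ((#{i | Int.fract (x i) ≠ 0} : ℤ) : K) = ((4 * (z - ∑ i, n i) : ℤ) : K) := by
    have hsum : ∑ i, Int.fract (x i) ^ 2 = z - ∑ i, n i := by
      push_cast
      rw [← hz, ← sum_sub_distrib]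
      exact sum_congr rfl fun i _ => by rw [← hn i]; ring
    rw [sum_fract_sq_eq_card_div_four hx] at hsum
    push_cast at hsum ⊢
    linarith
  exact Int.natCast_dvd_natCast.mp ⟨_, Int.cast_injective hcard⟩

end HalfIntegers

theorem exists_two_mul_eq_intCast_of_forall_two_mul_sum_eq_intCast {K ι : Type*} [Field K]
    [Fintype ι] [DecidableEq ι] {x : ι → K}
    (hx : ∀ m : ι → ℤ, ∃ z : ℤ, 2 * ∑ i, x i * (m i : K) = z) (i : ι) :
    ∃ a : ℤ, 2 * x i = a := by
  simpa [Pi.single_apply] using hx (Pi.single i 1)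

theorem isotropic_represented_by_root_A1r_general (r : ℕ) (hr7 : r ≤ 7)
    (x : Fin r → ℚ)
    (hdual : ∀ m : Fin r → ℤ, ∃ z : ℤ, 2 * ∑ i, x i * (m i : ℚ) = z)
    (hnotint : ¬ ∀ i, ∃ a : ℤ, x i = a)
    (hiso : ∃ z : ℤ, 2 * ∑ i, x i * x i = 2 * (z : ℚ)) :
    ∃ y : Fin r → ℚ, (∀ i, ∃ a : ℤ, y i - x i = a) ∧ 2 * ∑ i, y i * y i = 2 := by
  have hhalf := exists_two_mul_eq_intCast_of_forall_two_mul_sum_eq_intCast hdual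
  obtain ⟨z, hz⟩ := hiso
  have hdvd : 4 ∣ #{i | Int.fract (x i) ≠ 0} :=
    four_dvd_card_fract_ne_zero hhalf (z := z) (by simpa [sq] using hz)
  have hpos : 0 < #{i | Int.fract (x i) ≠ 0} := by
    push Not at hnotint
    obtain ⟨i, hi⟩ := hnotint
    exact card_pos.mpr ⟨i, by simpa [Int.fract_eq_zero_iff, eq_comm] using hi⟩
  have hle : #{i | Int.fract (x i) ≠ 0} ≤ r := (card_le_univ _).trans_eq (Fintype.card_fin r)
  have hcard : #{i | Int.fract (x i) ≠ 0} = 4 := by omega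
  refine ⟨fun i => Int.fract (x i), fun i => ⟨-⌊x i⌋, by simp [← Int.self_sub_floor]⟩, ?_⟩
  simp only [← sq, sum_fract_sq_eq_card_div_four hhalf, hcard]
  norm_num

/-- Let `1 ≤ r ≤ 7` and let `M = ℤʳ` equipped with the bilinear form `⟨x,y⟩ = 2⬝∑ xᵢyᵢ`
(the lattice `A₁ʳ`).  Let `x ∈ ℚʳ` be such that `⟨x,m⟩ ∈ ℤ` for all `m ∈ M`, `x ∉ ℤʳ`, and
`⟨x,x⟩ ∈ 2ℤ`.  Then there exists `y ∈ ℚʳ` with `y − x ∈ ℤʳ` and `⟨y,y⟩ = 2`.  In other words,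
for `r < 8` every nonzero isotropic element of the discriminant group of `A₁ʳ` is represented
by a root. -/
theorem isotropic_represented_by_root_A1r (r : ℕ) (hr1 : 1 ≤ r) (hr7 : r ≤ 7)
    (x : Fin r → ℚ)
    (hdual : ∀ m : Fin r → ℤ, ∃ z : ℤ, 2 * ∑ i, x i * (m i : ℚ) = z)
    (hnotint : ¬ ∀ i, ∃ a : ℤ, x i = a)
    (hiso : ∃ z : ℤ, 2 * ∑ i, x i * x i = 2 * (z : ℚ)) :
    ∃ y : Fin r → ℚ, (∀ i, ∃ a : ℤ, y i - x i = a) ∧ 2 * ∑ i, y i * y i = 2 :=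
  isotropic_represented_by_root_A1r_general r hr7 x hdual hnotint hiso
end

section
/- Let m ≥ 5 and let v₁,…,v_{m+3} be pairwise orthogonal roots of the lattice D_{2m}. Let M be the ℤ-span of v₁,…,v_{m+3} and let M' be the primitive closure of M in D_{2m}. Then there exists a subgroup H of the quotient group M'/M of order 4 such that every nonzero element of H is the class of a root of D_{2m} lying in M'. -/
/-- The primitive closure of a subgroup `M` inside the lattice `Dₙ`:
`M' = {x ∈ Dₙ : kx ∈ M for some nonzero integer k}`. -/
def primClosure (n : ℕ) (M : AddSubgroup (Fin n → ℤ)) : AddSubgroup (Fin n → ℤ) where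
  carrier := {x | x ∈ DLat n ∧ ∃ k : ℤ, k ≠ 0 ∧ k • x ∈ M}
  zero_mem' := ⟨(DLat n).zero_mem, 1, one_ne_zero, by simpa using M.zero_mem⟩
  add_mem' := by
    rintro a b ⟨haD, k, hk, hka⟩ ⟨hbD, l, hl, hlb⟩
    refine ⟨(DLat n).add_mem haD hbD, k * l, mul_ne_zero hk hl, ?_⟩
    have h1 : (k * l) • (a + b) = l • (k • a) + k • (l • b) := by
      rw [smul_add, smul_smul, smul_smul, mul_comm l k]
    rw [h1]
    exact M.add_mem (M.zsmul_mem hka l) (M.zsmul_mem hlb k)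
  neg_mem' := by
    rintro a ⟨haD, k, hk, hka⟩
    exact ⟨(DLat n).neg_mem haD, k, hk, by simpa [smul_neg] using M.neg_mem hka⟩

/-! A root of `ℤⁿ` has the form `±eₐ ± e_b`. Two orthogonal roots have equal or disjoint supports,
and at most two of them share a support `{a, b}`: two such roots span `2eₐ`, which pairs
nontrivially with any third root on `{a, b}`. Hence `m + 3` pairwise orthogonal roots, whose
supports are disjoint pairs in a set of `2m` coordinates, fill at least three supports
`{aᵢ, bᵢ}` twice, and then `2e_{aᵢ} ∈ M`. The roots `e_{a₁} + e_{a₂}`, `e_{a₁} + e_{a₃}` and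
`e_{a₂} + e_{a₃}` lie in `M'`, and their classes form, with `0`, a Klein four-group. The classes
are nonzero because the parity of `x_{aᵢ} + x_{bᵢ}` vanishes on `M` but not on these roots. -/

open Finset

theorem Finset.card_le_card_image_add_card_filter_one_lt {α β : Type*} [DecidableEq β]
    {f : α → β} (s : Finset α) (hf : ∀ b, #{a ∈ s | f a = b} ≤ 2) :
    #s ≤ #(s.image f) + #{b ∈ s.image f | 1 < #{a ∈ s | f a = b}} := by
  rw [card_eq_sum_card_image f s, card_filter, card_eq_sum_ones, ← sum_add_distrib]
  exact sum_le_sum fun b _ => by have := hf b; split_ifs <;> omega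

theorem AddSubgroup.exists_card_eq_four {G : Type*} [AddCommGroup G] {x y : G} (hx : x + x = 0)
    (hy : y + y = 0) (hx0 : x ≠ 0) (hy0 : y ≠ 0) (hxy : x + y ≠ 0) :
    ∃ H : AddSubgroup G, Nat.card H = 4 ∧ ∀ h ∈ H, h = 0 ∨ h = x ∨ h = y ∨ h = x + y := by
  refine ⟨{ carrier := {0, x, y, x + y}
            zero_mem' := by simp
            add_mem' := ?_
            neg_mem' := ?_ }, ?_, fun h hh => hh⟩
  · rintro a b ha hb
    simp only [Set.mem_insert_iff, Set.mem_singleton_iff] at ha hb ⊢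
    rcases ha with rfl | rfl | rfl | rfl <;> rcases hb with rfl | rfl | rfl | rfl <;> grind
  · rintro a ha
    simp only [Set.mem_insert_iff, Set.mem_singleton_iff] at ha ⊢
    rcases ha with rfl | rfl | rfl | rfl <;> grind
  · have hne : x ≠ y := fun h => hxy (h ▸ hx)
    exact Set.ncard_eq_four.2 ⟨0, x, y, x + y, hx0.symm, hy0.symm, hxy.symm, hne,
      by simpa using hy0, by simpa using hx0, rfl⟩

theorem QuotientAddGroup.mk_eq_zero_iff_mem_addSubgroupOf {G : Type*} [AddCommGroup G]
    {M P : AddSubgroup G} {x : P} :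
    (x : P ⧸ M.addSubgroupOf P) = 0 ↔ (x : G) ∈ M := by
  rw [QuotientAddGroup.eq_zero_iff, AddSubgroup.mem_addSubgroupOf]

namespace DLat

section Roots

variable {ι : Type*} [Fintype ι]

def support (x : ι → ℤ) : Finset ι := {i | x i ≠ 0}

lemma mem_support {x : ι → ℤ} {i : ι} : i ∈ support x ↔ x i ≠ 0 := by
  simp [support]

lemma mul_self_eq_one_of_mem_support {x : ι → ℤ} (hx : x ⬝ᵥ x = 2) {i : ι}
    (hi : i ∈ support x) : x i * x i = 1 := by
  have hle : x i * x i ≤ 2 :=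
    hx ▸ single_le_sum (fun j _ => mul_self_nonneg (x j)) (mem_univ i)
  have h0 := mem_support.1 hi
  have h1 : x i ≤ 1 := by nlinarith
  have h2 : -1 ≤ x i := by nlinarith
  rcases (by omega : x i = -1 ∨ x i = 1) with h | h <;> simp [h]

lemma dotProduct_eq_sum_support (x y : ι → ℤ) : x ⬝ᵥ y = ∑ i ∈ support x, x i * y i :=
  (sum_subset (subset_univ _) fun i _ hi => by
    rw [mem_support, not_not] at hi; rw [hi, zero_mul]).symm

lemma card_support_of_dotProduct_self_eq_two {x : ι → ℤ} (hx : x ⬝ᵥ x = 2) :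
    #(support x) = 2 := by
  have : (#(support x) : ℤ) = 2 := by
    rw [← hx, dotProduct_eq_sum_support, card_eq_sum_ones, Nat.cast_sum]
    exact sum_congr rfl fun i hi => (mul_self_eq_one_of_mem_support hx hi).symm
  exact_mod_cast this

variable [DecidableEq ι]

lemma dotProduct_eq_sum_inter (x y : ι → ℤ) :
    x ⬝ᵥ y = ∑ i ∈ support x ∩ support y, x i * y i := by
  rw [dotProduct_eq_sum_support]
  refine (sum_subset inter_subset_left fun i hix hi => ?_).symm
  simp only [mem_inter, hix, true_and, mem_support, not_not] at hi
  rw [hi, mul_zero]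

lemma support_eq_or_disjoint_of_dotProduct_eq_zero {x y : ι → ℤ} (hx : x ⬝ᵥ x = 2)
    (hy : y ⬝ᵥ y = 2) (hxy : x ⬝ᵥ y = 0) :
    support x = support y ∨ Disjoint (support x) (support y) := by
  by_contra! ⟨hne, hnd⟩
  have hcard : #(support x ∩ support y) = 1 := by
    have hle : #(support x ∩ support y) ≤ 2 :=
      (card_support_of_dotProduct_self_eq_two hx) ▸ card_le_card inter_subset_left
    have hpos : 0 < #(support x ∩ support y) :=
      card_pos.2 (not_disjoint_iff_nonempty_inter.1 hnd)
    have hne2 : #(support x ∩ support y) ≠ 2 := fun h2 => hne <|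
      (eq_of_subset_of_card_le inter_subset_left
          (by rw [h2, card_support_of_dotProduct_self_eq_two hx])).symm.trans
        (eq_of_subset_of_card_le inter_subset_right
          (by rw [h2, card_support_of_dotProduct_self_eq_two hy]))
    omega
  obtain ⟨i, hi⟩ := card_eq_one.1 hcard
  have hmem : i ∈ support x ∩ support y := hi ▸ mem_singleton_self i
  rw [mem_inter, mem_support, mem_support] at hmem
  rw [dotProduct_eq_sum_inter, hi, sum_singleton] at hxy
  exact mul_ne_zero hmem.1 hmem.2 hxy

lemma dotProduct_eq_of_support_eq_pair {x : ι → ℤ} {a b : ι} (hab : a ≠ b)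
    (hx : support x = {a, b}) (y : ι → ℤ) : x ⬝ᵥ y = x a * y a + x b * y b := by
  rw [dotProduct_eq_sum_support, hx, sum_pair hab]

lemma smul_add_smul_eq_two_smul_single {x y : ι → ℤ} {a b : ι} (hx : x ⬝ᵥ x = 2)
    (hy : y ⬝ᵥ y = 2) (hxy : x ⬝ᵥ y = 0) (hab : a ≠ b) (hsx : support x = {a, b})
    (hsy : support y = {a, b}) : x a • x + y a • y = (2 : ℤ) • Pi.single a 1 := by
  have ha : a ∈ ({a, b} : Finset ι) := mem_insert_self a {b}
  have hb : b ∈ ({a, b} : Finset ι) := mem_insert_of_mem (mem_singleton_self b)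
  have hxa := mul_self_eq_one_of_mem_support hx (hsx ▸ ha)
  have hya := mul_self_eq_one_of_mem_support hy (hsy ▸ ha)
  have hyb := mul_self_eq_one_of_mem_support hy (hsy ▸ hb)
  rw [dotProduct_eq_of_support_eq_pair hab hsx] at hxy
  ext i
  simp only [Pi.add_apply, Pi.smul_apply, smul_eq_mul, Pi.single_apply, mul_ite, mul_one,
    mul_zero]
  by_cases hia : i = a
  · subst hia
    rw [if_pos rfl]
    linear_combination hxa + hya
  rw [if_neg hia]
  by_cases hib : i = b
  · subst hib
    linear_combination (x a * y i) * hxy - y a * y i * hxa - x a * x i * hyb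
  have hi : i ∉ ({a, b} : Finset ι) := by simp [hia, hib]
  have hxi : x i = 0 := not_ne_iff.1 <| mem_support.not.1 (hsx ▸ hi)
  have hyi : y i = 0 := not_ne_iff.1 <| mem_support.not.1 (hsy ▸ hi)
  rw [hxi, hyi, mul_zero, mul_zero, add_zero]

lemma dotProduct_self_single_add_single {a c : ι} (hac : a ≠ c) :
    (Pi.single a 1 + Pi.single c 1 : ι → ℤ) ⬝ᵥ (Pi.single a 1 + Pi.single c 1) = 2 := by
  simp [dotProduct_add, hac, hac.symm]

lemma eq_zero_of_dotProduct_eq_zero_of_support_eq_pair {x y z : ι → ℤ} {a b : ι}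
    (hx : x ⬝ᵥ x = 2) (hy : y ⬝ᵥ y = 2) (hxy : x ⬝ᵥ y = 0) (hab : a ≠ b)
    (hsx : support x = {a, b}) (hsy : support y = {a, b}) (hzx : z ⬝ᵥ x = 0)
    (hzy : z ⬝ᵥ y = 0) : z a = 0 := by
  have h := congrArg (z ⬝ᵥ ·) (smul_add_smul_eq_two_smul_single hx hy hxy hab hsx hsy)
  simp only [dotProduct_add, dotProduct_smul, hzx, hzy,
    dotProduct_single, mul_one, smul_eq_mul] at h
  omega

end Roots

def evenSumOn {ι : Type*} (s : Finset ι) : AddSubgroup (ι → ℤ) where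
  carrier := {x | Even (∑ i ∈ s, x i)}
  zero_mem' := by simp
  add_mem' ha hb := by simpa [sum_add_distrib] using ha.add hb
  neg_mem' ha := by simpa using ha.neg

section Coordinates

variable {ι : Type*} [DecidableEq ι]

lemma two_smul_single_add_single_mem {M : AddSubgroup (ι → ℤ)} {a c : ι}
    (ha : (2 : ℤ) • Pi.single a 1 ∈ M) (hc : (2 : ℤ) • Pi.single c 1 ∈ M) :
    (2 : ℤ) • (Pi.single a 1 + Pi.single c 1) ∈ M := by
  rw [smul_add]
  exact add_mem ha hc

lemma single_add_single_notMem_evenSumOn {s : Finset ι} {a c : ι} (ha : a ∈ s)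
    (hc : c ∉ s) : (Pi.single a 1 + Pi.single c 1 : ι → ℤ) ∉ evenSumOn s := by
  change ¬Even (∑ i ∈ s, (Pi.single a 1 + Pi.single c 1 : ι → ℤ) i)
  simp [sum_add_distrib, ha, hc]

end Coordinates

section Family

variable {ι κ : Type*} [Fintype ι] [DecidableEq ι] {v : κ → ι → ℤ}

lemma even_sum_of_support_eq_or_disjoint {x : ι → ℤ} (hx : x ⬝ᵥ x = 2) {s : Finset ι}
    (hs : support x = s ∨ Disjoint (support x) s) : Even (∑ i ∈ s, x i) := by
  rcases hs with rfl | hd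
  · obtain ⟨a, b, hab, hsupp⟩ := card_eq_two.1 (card_support_of_dotProduct_self_eq_two hx)
    have hodd : ∀ i ∈ support x, Odd (x i) := fun i hi =>
      (Int.odd_mul.1 ((mul_self_eq_one_of_mem_support hx hi).symm ▸ odd_one)).1
    rw [hsupp, sum_pair hab]
    exact (hodd a (by simp [hsupp])).add_odd (hodd b (by simp [hsupp]))
  · rw [sum_eq_zero fun i hi => not_ne_iff.1 <| mem_support.not.1 <| disjoint_right.1 hd hi]
    exact Even.zero

lemma disjoint_support_of_ne (hroot : ∀ k, v k ⬝ᵥ v k = 2)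
    (horth : Pairwise fun k l => v k ⬝ᵥ v l = 0) {k l : κ} (h : support (v k) ≠ support (v l)) :
    Disjoint (support (v k)) (support (v l)) :=
  (support_eq_or_disjoint_of_dotProduct_eq_zero (hroot k) (hroot l)
    (horth fun hkl => h (hkl ▸ rfl))).resolve_left h

def IsDoubledSupport (v : κ → ι → ℤ) (s : Finset ι) : Prop :=
  ∃ k l, k ≠ l ∧ support (v k) = s ∧ support (v l) = s

lemma IsDoubledSupport.exists_two_smul_single_mem {s : Finset ι} (hs : IsDoubledSupport v s)
    (hroot : ∀ k, v k ⬝ᵥ v k = 2) (horth : Pairwise fun k l => v k ⬝ᵥ v l = 0) :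
    ∃ a ∈ s, (2 : ℤ) • Pi.single a 1 ∈ AddSubgroup.closure (Set.range v) := by
  obtain ⟨k, l, hkl, hk, hl⟩ := hs
  obtain ⟨a, b, hab, hsupp⟩ := card_eq_two.1 (card_support_of_dotProduct_self_eq_two (hroot k))
  refine ⟨a, hk ▸ hsupp ▸ mem_insert_self a {b}, ?_⟩
  rw [← smul_add_smul_eq_two_smul_single (hroot k) (hroot l) (horth hkl) hab hsupp
    (hl.trans (hk.symm.trans hsupp))]
  have hmem : ∀ k, v k ∈ AddSubgroup.closure (Set.range v) :=
    fun k => AddSubgroup.subset_closure ⟨k, rfl⟩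
  exact add_mem (zsmul_mem (hmem k) _) (zsmul_mem (hmem l) _)

lemma IsDoubledSupport.closure_range_le_evenSumOn {s : Finset ι} (hs : IsDoubledSupport v s)
    (hroot : ∀ k, v k ⬝ᵥ v k = 2) (horth : Pairwise fun k l => v k ⬝ᵥ v l = 0) :
    AddSubgroup.closure (Set.range v) ≤ evenSumOn s := by
  obtain ⟨k, -, -, rfl, -⟩ := hs
  rw [AddSubgroup.closure_le]
  rintro _ ⟨l, rfl⟩
  refine even_sum_of_support_eq_or_disjoint (hroot l) ?_
  obtain hlk | hlk := eq_or_ne (support (v l)) (support (v k))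
  · exact Or.inl hlk
  · exact Or.inr (disjoint_support_of_ne hroot horth hlk)

lemma IsDoubledSupport.disjoint {s t : Finset ι} (hs : IsDoubledSupport v s)
    (ht : IsDoubledSupport v t) (hroot : ∀ k, v k ⬝ᵥ v k = 2)
    (horth : Pairwise fun k l => v k ⬝ᵥ v l = 0) (hst : s ≠ t) : Disjoint s t := by
  obtain ⟨k, -, -, rfl, -⟩ := hs
  obtain ⟨l, -, -, rfl, -⟩ := ht
  exact disjoint_support_of_ne hroot horth hst

variable [Fintype κ]

lemma card_filter_support_eq_le_two (hroot : ∀ k, v k ⬝ᵥ v k = 2)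
    (horth : Pairwise fun k l => v k ⬝ᵥ v l = 0) (s : Finset ι) :
    #{k | support (v k) = s} ≤ 2 := by
  by_contra! h
  obtain ⟨k, hk, l, hl, r, hr, hkl, hkr, hlr⟩ := two_lt_card.1 h
  simp only [mem_filter, mem_univ, true_and] at hk hl hr
  obtain ⟨a, b, hab, hsupp⟩ := card_eq_two.1 (card_support_of_dotProduct_self_eq_two (hroot k))
  have hra : v r a ≠ 0 := mem_support.1 (hr.trans (hk.symm.trans hsupp) ▸ mem_insert_self a {b})
  exact hra (eq_zero_of_dotProduct_eq_zero_of_support_eq_pair (hroot k) (hroot l) (horth hkl)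
    hab hsupp (hl.trans (hk.symm.trans hsupp)) (horth hkr.symm) (horth hlr.symm))

lemma two_mul_card_image_support_le (hroot : ∀ k, v k ⬝ᵥ v k = 2)
    (horth : Pairwise fun k l => v k ⬝ᵥ v l = 0) :
    2 * #(univ.image fun k => support (v k)) ≤ Fintype.card ι := by
  set supports := univ.image fun k => support (v k)
  have hdisj : (supports : Set (Finset ι)).PairwiseDisjoint id := by
    rintro _ hs _ ht hst
    obtain ⟨k, -, rfl⟩ := mem_image.1 hs
    obtain ⟨l, -, rfl⟩ := mem_image.1 ht
    exact disjoint_support_of_ne hroot horth hst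
  calc 2 * #supports = ∑ s ∈ supports, #s := by
        rw [sum_const_nat fun s hs => ?_, mul_comm]
        obtain ⟨k, -, rfl⟩ := mem_image.1 hs
        exact card_support_of_dotProduct_self_eq_two (hroot k)
    _ = #(supports.biUnion id) := (card_biUnion hdisj).symm
    _ ≤ Fintype.card ι := card_le_univ _

lemma exists_three_isDoubledSupport (hroot : ∀ k, v k ⬝ᵥ v k = 2)
    (horth : Pairwise fun k l => v k ⬝ᵥ v l = 0)
    (hcard : Fintype.card ι + 6 ≤ 2 * Fintype.card κ) :
    ∃ s₁ s₂ s₃, IsDoubledSupport v s₁ ∧ IsDoubledSupport v s₂ ∧ IsDoubledSupport v s₃ ∧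
      s₁ ≠ s₂ ∧ s₁ ≠ s₃ ∧ s₂ ≠ s₃ := by
  have hcount := card_le_card_image_add_card_filter_one_lt (f := fun k => support (v k)) univ
    (card_filter_support_eq_le_two hroot horth)
  have himage := two_mul_card_image_support_le hroot horth
  rw [card_univ] at hcount
  set doubled := {s ∈ univ.image (fun k => support (v k)) | 1 < #{k | support (v k) = s}}
  obtain ⟨s₁, h₁, s₂, h₂, s₃, h₃, h₁₂, h₁₃, h₂₃⟩ := two_lt_card.1 (show 2 < #doubled by omega)
  have hdoubled : ∀ s ∈ doubled, IsDoubledSupport v s := by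
    intro s hs
    obtain ⟨k, hk, l, hl, hkl⟩ := one_lt_card.1 (mem_filter.1 hs).2
    exact ⟨k, l, hkl, (mem_filter.1 hk).2, (mem_filter.1 hl).2⟩
  exact ⟨s₁, s₂, s₃, hdoubled s₁ h₁, hdoubled s₂ h₂, hdoubled s₃ h₃, h₁₂, h₁₃, h₂₃⟩

end Family

section PrimitiveClosure

variable {n : ℕ} {M : AddSubgroup (Fin n → ℤ)}

lemma single_add_single_mem_DLat (a c : Fin n) : Pi.single a 1 + Pi.single c 1 ∈ DLat n := by
  change Even (∑ i, (Pi.single a 1 + Pi.single c 1 : Fin n → ℤ) i)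
  simp [sum_add_distrib]

lemma single_add_single_mem_primClosure {a c : Fin n} (ha : (2 : ℤ) • Pi.single a 1 ∈ M)
    (hc : (2 : ℤ) • Pi.single c 1 ∈ M) : Pi.single a 1 + Pi.single c 1 ∈ primClosure n M :=
  ⟨single_add_single_mem_DLat a c, 2, two_ne_zero, two_smul_single_add_single_mem ha hc⟩

theorem exists_card_eq_four_of_two_smul_single_mem {a₁ a₂ a₃ : Fin n} {s₁ s₂ : Finset (Fin n)}
    (h₁ : (2 : ℤ) • Pi.single a₁ 1 ∈ M) (h₂ : (2 : ℤ) • Pi.single a₂ 1 ∈ M)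
    (h₃ : (2 : ℤ) • Pi.single a₃ 1 ∈ M) (hM₁ : M ≤ evenSumOn s₁) (hM₂ : M ≤ evenSumOn s₂)
    (ha₁ : a₁ ∈ s₁) (ha₂ : a₂ ∉ s₁) (ha₃ : a₃ ∉ s₁) (ha₂' : a₂ ∈ s₂) (ha₃' : a₃ ∉ s₂) :
    ∃ H : AddSubgroup (primClosure n M ⧸ M.addSubgroupOf (primClosure n M)), Nat.card H = 4 ∧
      ∀ h ∈ H, h ≠ 0 → ∃ (w : Fin n → ℤ) (hw : w ∈ primClosure n M),
        w ∈ DLat n ∧ w ⬝ᵥ w = 2 ∧ QuotientAddGroup.mk (⟨w, hw⟩ : primClosure n M) = h := by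
  set P := primClosure n M
  have p₁₂ := single_add_single_mem_primClosure h₁ h₂
  have p₁₃ := single_add_single_mem_primClosure h₁ h₃
  have p₂₃ := single_add_single_mem_primClosure h₂ h₃
  set q₁₂ : P ⧸ M.addSubgroupOf P := QuotientAddGroup.mk ⟨_, p₁₂⟩
  set q₁₃ : P ⧸ M.addSubgroupOf P := QuotientAddGroup.mk ⟨_, p₁₃⟩
  set q₂₃ : P ⧸ M.addSubgroupOf P := QuotientAddGroup.mk ⟨_, p₂₃⟩
  have horder : ∀ x : P, (2 : ℤ) • (x : Fin n → ℤ) ∈ M → (x : P ⧸ M.addSubgroupOf P) + x = 0 :=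
    fun x hx => by
      rwa [← QuotientAddGroup.mk_add, QuotientAddGroup.mk_eq_zero_iff_mem_addSubgroupOf,
        AddSubgroup.coe_add, ← two_smul ℤ]
  have hsum : q₁₂ + q₁₃ = q₂₃ := by
    rw [← QuotientAddGroup.mk_add, QuotientAddGroup.eq, AddSubgroup.mem_addSubgroupOf]
    convert M.neg_mem h₁ using 1
    simp only [AddSubgroup.coe_add, AddSubgroup.coe_neg, two_smul]
    abel
  have hne : ∀ {a c : Fin n} (p : Pi.single a 1 + Pi.single c 1 ∈ P) {s : Finset (Fin n)},
      M ≤ evenSumOn s → a ∈ s → c ∉ s →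
        (QuotientAddGroup.mk ⟨_, p⟩ : P ⧸ M.addSubgroupOf P) ≠ 0 :=
    fun p _ hM ha hc h => single_add_single_notMem_evenSumOn ha hc
      (hM (QuotientAddGroup.mk_eq_zero_iff_mem_addSubgroupOf.1 h))
  obtain ⟨H, hcard, hH⟩ := AddSubgroup.exists_card_eq_four
    (horder _ (two_smul_single_add_single_mem h₁ h₂))
    (horder _ (two_smul_single_add_single_mem h₁ h₃)) (hne p₁₂ hM₁ ha₁ ha₂)
    (hne p₁₃ hM₁ ha₁ ha₃) (hsum ▸ hne p₂₃ hM₂ ha₂' ha₃')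
  refine ⟨H, hcard, fun h hh h0 => ?_⟩
  rcases hH h hh with rfl | rfl | rfl | rfl
  · exact absurd rfl h0
  · exact ⟨_, p₁₂, p₁₂.1, dotProduct_self_single_add_single (ne_of_mem_of_not_mem ha₁ ha₂), rfl⟩
  · exact ⟨_, p₁₃, p₁₃.1, dotProduct_self_single_add_single (ne_of_mem_of_not_mem ha₁ ha₃), rfl⟩
  · exact ⟨_, p₂₃, p₂₃.1, dotProduct_self_single_add_single (ne_of_mem_of_not_mem ha₂' ha₃'),
      hsum.symm⟩

end PrimitiveClosure

end DLat

theorem roots_in_primitive_closure_D_even_general (m : ℕ)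
    (v : Fin (m + 3) → (Fin (2 * m) → ℤ))
    (hroot : ∀ k, ∑ i, v k i * v k i = 2)
    (horth : ∀ k l, k ≠ l → ∑ i, v k i * v l i = 0) :
    ∃ H : AddSubgroup
        ((primClosure (2 * m) (AddSubgroup.closure (Set.range v))) ⧸
          (AddSubgroup.closure (Set.range v)).addSubgroupOf
            (primClosure (2 * m) (AddSubgroup.closure (Set.range v)))),
      Nat.card H = 4 ∧
      ∀ h ∈ H, h ≠ 0 →
        ∃ (w : Fin (2 * m) → ℤ)
          (hw : w ∈ primClosure (2 * m) (AddSubgroup.closure (Set.range v))),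
          w ∈ DLat (2 * m) ∧ (∑ i, w i * w i = 2) ∧
            QuotientAddGroup.mk (⟨w, hw⟩ :
              primClosure (2 * m) (AddSubgroup.closure (Set.range v))) = h := by
  open DLat in
  have horth : Pairwise fun k l => v k ⬝ᵥ v l = 0 := horth
  obtain ⟨s₁, s₂, s₃, hd₁, hd₂, hd₃, h₁₂, h₁₃, h₂₃⟩ :=
    exists_three_isDoubledSupport hroot horth (by simp only [Fintype.card_fin]; omega)
  obtain ⟨a₁, ha₁, h₁⟩ := hd₁.exists_two_smul_single_mem hroot horth
  obtain ⟨a₂, ha₂, h₂⟩ := hd₂.exists_two_smul_single_mem hroot horth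
  obtain ⟨a₃, ha₃, h₃⟩ := hd₃.exists_two_smul_single_mem hroot horth
  exact exists_card_eq_four_of_two_smul_single_mem h₁ h₂ h₃
    (hd₁.closure_range_le_evenSumOn hroot horth) (hd₂.closure_range_le_evenSumOn hroot horth) ha₁
    (disjoint_right.1 (hd₁.disjoint hd₂ hroot horth h₁₂) ha₂)
    (disjoint_right.1 (hd₁.disjoint hd₃ hroot horth h₁₃) ha₃) ha₂
    (disjoint_right.1 (hd₂.disjoint hd₃ hroot horth h₂₃) ha₃)

/-- Let `m ≥ 5` and let `v₁,…,v_{m+3}` be pairwise orthogonal roots of the lattice `D_{2m}`.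
Let `M` be the `ℤ`-span of `v₁,…,v_{m+3}` and let `M'` be the primitive closure of `M` in
`D_{2m}`.  Then there exists a subgroup `H` of the quotient group `M'/M` of order 4 such that
every nonzero element of `H` is the class of a root of `D_{2m}` lying in `M'`. -/
theorem roots_in_primitive_closure_D_even (m : ℕ) (hm : 5 ≤ m)
    (v : Fin (m + 3) → (Fin (2 * m) → ℤ))
    (hmem : ∀ k, v k ∈ DLat (2 * m))
    (hroot : ∀ k, ∑ i, v k i * v k i = 2)
    (horth : ∀ k l, k ≠ l → ∑ i, v k i * v l i = 0) :
    ∃ H : AddSubgroup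
        ((primClosure (2 * m) (AddSubgroup.closure (Set.range v))) ⧸
          (AddSubgroup.closure (Set.range v)).addSubgroupOf
            (primClosure (2 * m) (AddSubgroup.closure (Set.range v)))),
      Nat.card H = 4 ∧
      ∀ h ∈ H, h ≠ 0 →
        ∃ (w : Fin (2 * m) → ℤ)
          (hw : w ∈ primClosure (2 * m) (AddSubgroup.closure (Set.range v))),
          w ∈ DLat (2 * m) ∧ (∑ i, w i * w i = 2) ∧
            QuotientAddGroup.mk (⟨w, hw⟩ :
              primClosure (2 * m) (AddSubgroup.closure (Set.range v))) = h :=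
  roots_in_primitive_closure_D_even_general m v hroot horth
end

section
/- There is no family 𝓗 of 6-element subsets of a 13-element set X such that (a) every 2-element subset of X is contained in at least one member of 𝓗, and (b) any two distinct members of 𝓗 intersect in at most 2 elements. (This is the combinatorial census underlying the proof that a non-supersingular normal quartic surface cannot have 13 nodes: the non-reduced planes would form such a family.) -/
/-!
Let `n = #ℋ`. Covering the 78 pairs by blocks containing 15 pairs each forces `n ≥ 6`.
On the other hand, with `r x` the number of blocks through `x`, we have `∑ r x = 6n` and
`∑ r x ^ 2 = ∑_{A,B} #(A ∩ B) ≤ n (6 + 2 (n - 1))`, so Cauchy–Schwarz over the 13 points gives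
`36 n ≤ 13 (2 n + 4)`, i.e. `n ≤ 5`.
-/

open Finset

namespace Finset

variable {α ι : Type*} [DecidableEq α]

theorem sum_sum_card_inter_le {ℋ : Finset (Finset α)} {k t : ℕ}
    (hcard : ∀ A ∈ ℋ, #A = k) (hinter : ∀ A ∈ ℋ, ∀ B ∈ ℋ, A ≠ B → #(A ∩ B) ≤ t) :
    ∑ A ∈ ℋ, ∑ B ∈ ℋ, #(A ∩ B) ≤ #ℋ * (k + (#ℋ - 1) * t) := by
  refine sum_le_card_nsmul _ _ _ fun A hA => ?_
  rw [← add_sum_erase _ _ hA, inter_self, hcard A hA, ← card_erase_of_mem hA]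
  gcongr
  simpa using sum_le_card_nsmul _ _ _ fun B hB =>
    hinter A hA B (mem_of_mem_erase hB) (ne_of_mem_erase hB).symm

variable [Fintype α]

theorem sum_card_filter_mem_eq_sum_card (s : Finset ι) (f : ι → Finset α) :
    ∑ x, #{i ∈ s | x ∈ f i} = ∑ i ∈ s, #(f i) := by
  simp_rw [card_filter]
  rw [sum_comm]
  simp

theorem sum_sq_card_filter_mem (ℋ : Finset (Finset α)) :
    ∑ x, #{A ∈ ℋ | x ∈ A} ^ 2 = ∑ A ∈ ℋ, ∑ B ∈ ℋ, #(A ∩ B) := by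
  have hsq : ∀ x, #{A ∈ ℋ | x ∈ A} ^ 2 = #{p ∈ ℋ ×ˢ ℋ | x ∈ p.1 ∩ p.2} := by
    intro x
    rw [sq, ← card_product]
    congr 1
    ext
    simp [and_and_and_comm]
  simp_rw [hsq, sum_card_filter_mem_eq_sum_card, sum_product]

theorem choose_le_card_mul_choose {ℋ : Finset (Finset α)} {k r : ℕ}
    (hcard : ∀ A ∈ ℋ, #A = k) (hcover : ∀ p : Finset α, #p = r → ∃ A ∈ ℋ, p ⊆ A) :
    (Fintype.card α).choose r ≤ #ℋ * k.choose r :=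
  calc (Fintype.card α).choose r = #(univ.powersetCard r) := by simp
    _ ≤ #(ℋ.biUnion (powersetCard r)) := card_le_card fun p hp => by
        obtain ⟨A, hA, hpA⟩ := hcover p (mem_powersetCard.1 hp).2
        exact mem_biUnion.2 ⟨A, hA, mem_powersetCard.2 ⟨hpA, (mem_powersetCard.1 hp).2⟩⟩
    _ ≤ ∑ A ∈ ℋ, #(A.powersetCard r) := card_biUnion_le
    _ = #ℋ * k.choose r := by
        rw [sum_congr rfl fun A hA => by rw [card_powersetCard, hcard A hA], sum_const, smul_eq_mul]

theorem card_mul_sq_le {ℋ : Finset (Finset α)} {k t : ℕ}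
    (hcard : ∀ A ∈ ℋ, #A = k) (hinter : ∀ A ∈ ℋ, ∀ B ∈ ℋ, A ≠ B → #(A ∩ B) ≤ t) :
    #ℋ * k ^ 2 ≤ Fintype.card α * (k + (#ℋ - 1) * t) := by
  rcases (#ℋ).eq_zero_or_pos with h | hpos
  · simp [h]
  refine Nat.le_of_mul_le_mul_left ?_ hpos
  calc #ℋ * (#ℋ * k ^ 2) = (∑ A ∈ ℋ, #A) ^ 2 := by
        rw [sum_congr rfl hcard, sum_const, smul_eq_mul]
        ring
    _ = (∑ x, #{A ∈ ℋ | x ∈ A}) ^ 2 :=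
        congrArg (· ^ 2) (sum_card_filter_mem_eq_sum_card ℋ id).symm
    _ ≤ Fintype.card α * ∑ x, #{A ∈ ℋ | x ∈ A} ^ 2 := sq_sum_le_card_mul_sum_sq
    _ ≤ Fintype.card α * (#ℋ * (k + (#ℋ - 1) * t)) := by
        rw [sum_sq_card_filter_mem]
        gcongr
        exact sum_sum_card_inter_le hcard hinter
    _ = #ℋ * (Fintype.card α * (k + (#ℋ - 1) * t)) := by ring

end Finset

/-- There is no family `𝓗` of 6-element subsets of a 13-element set `X` such that (a) every
2-element subset of `X` is contained in at least one member of `𝓗`, and (b) any two distinct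
members of `𝓗` intersect in at most 2 elements.  (This is the combinatorial census underlying
the proof that a non-supersingular normal quartic surface cannot have 13 nodes: the
non-reduced planes would form such a family.) -/
theorem no_thirteen_nodes_census :
    ¬ ∃ ℋ : Finset (Finset (Fin 13)),
      (∀ A ∈ ℋ, A.card = 6) ∧
      (∀ p : Finset (Fin 13), p.card = 2 → ∃ A ∈ ℋ, p ⊆ A) ∧
      (∀ A ∈ ℋ, ∀ B ∈ ℋ, A ≠ B → (A ∩ B).card ≤ 2) := by
  rintro ⟨ℋ, hcard, hcover, hinter⟩
  have hcovering := choose_le_card_mul_choose hcard hcover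
  have hpacking := card_mul_sq_le hcard hinter
  simp only [Fintype.card_fin, Nat.choose, Nat.reduceAdd] at hcovering hpacking
  omega
end
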